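/- arXiv:1801.02244 — 4 statements merged into one kernel-verified Lean document; each statement's English description precedes it below -/
import Mathlib

section
/- For all nonnegative integers n, m, k, l the following identity of balanced quantum binomial coefficients holds in ℚ(q): [n+k; m]·[m+l; k] = Σ_{j=0}^{min(m,k)} [l; k−j]·[n; m−j]·[n+l+j; j]. (Equivalently the sum may be taken over all integers j ≥ max(0, m−n); all extra terms vanish by the convention below.) -/
/-!
Induction on `k`. By absorption, `[k+1]·[m+l; k+1] = [m+l-k]·[m+l; k]`, the left side at
`(n, k+1)` is `[m+l-k]/[k+1]` times the left side at `(n+1, k)`. The right sides obey the same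
recursion: for the summand `T(n, k, j) = [l; k-j]·[n; m-j]·[n+l+j; j]`, the difference
`[k+1]·T(n, k+1, j) - [m+l-k]·T(n+1, k, j)` is `R(j) - R(j+1)` for an explicit
Wilf–Zeilberger-style certificate `R`, so its sum telescopes. After multiplying by quantum
integers that are nonzero away from two boundary values of `j`, absorption reduces this termwise
identity to one between products of four quantum integers, a Laurent-polynomial identity in `q`.
Extending binomials to integer arguments, vanishing outside `0 ≤ b ≤ a`, makes the boundary terms
of the telescoping sum vanish.
-/

noncomputable section

open scoped BigOperators

/-- The balanced quantum integer `[n] = (q^n - q^{-n})/(q - q^{-1})` in `ℚ(q)`. -/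
def qInt (n : ℕ) : RatFunc ℚ :=
  ((RatFunc.X : RatFunc ℚ) ^ n - (RatFunc.X : RatFunc ℚ)⁻¹ ^ n) /
    ((RatFunc.X : RatFunc ℚ) - (RatFunc.X : RatFunc ℚ)⁻¹)

/-- The balanced quantum factorial `[n]! = ∏_{j=1}^n [j]`. -/
def qFact (n : ℕ) : RatFunc ℚ := ∏ j ∈ Finset.range n, qInt (j + 1)

/-- The balanced quantum binomial coefficient `[a; b]`, equal to `[a]!/([b]!·[a-b]!)`
when `0 ≤ b ≤ a` and `0` otherwise. -/
def qBinom (a b : ℕ) : RatFunc ℚ :=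
  if b ≤ a then qFact a / (qFact b * qFact (a - b)) else 0

open Finset

section Field

variable {K : Type*} [Field K]

def qIntZ (q : K) (t : ℤ) : K := (q ^ t - q ^ (-t)) / (q - q⁻¹)

lemma qIntZ_zero (q : K) : qIntZ q 0 = 0 := by simp [qIntZ]

lemma qIntZ_four_term_identity {q : K} (hq : q ≠ 0) (n m k l j : ℤ) :
    qIntZ q (k + 1) * qIntZ q (l - k + j) * qIntZ q (n + 1 - m + j) * qIntZ q (n + l + 1)
      + qIntZ q (n + l + j + 1 - k) * qIntZ q (k + 1 - j) * qIntZ q (m - j)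
        * qIntZ q (n + l + j + 1)
    = qIntZ q (m + l - k) * qIntZ q (k + 1 - j) * qIntZ q (n + 1) * qIntZ q (n + l + j + 1)
      + qIntZ q (n + l + j - k) * qIntZ q (l - k + j) * qIntZ q (n + 1 - m + j) * qIntZ q j := by
  rcases eq_or_ne (q - q⁻¹) 0 with hd | hd
  · simp [qIntZ, hd]
  simp only [qIntZ, neg_add, neg_sub, zpow_add₀ hq, zpow_sub₀ hq, zpow_neg, zpow_one]
  field_simp
  ring

end Field

lemma RatFunc.X_zpow_eq_one_iff {K : Type*} [Field K] {m : ℤ} :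
    (RatFunc.X : RatFunc K) ^ m = 1 ↔ m = 0 := by
  classical
  refine ⟨fun h => ?_, fun h => by rw [h, zpow_zero]⟩
  simpa [h] using (RatFunc.inftyValuation.X_zpow K m).symm

lemma qIntZ_X_ne_zero {K : Type*} [Field K] {t : ℤ} (ht : t ≠ 0) :
    qIntZ (RatFunc.X : RatFunc K) t ≠ 0 := by
  have hX : (RatFunc.X : RatFunc K) ≠ 0 := RatFunc.X_ne_zero
  have numerator_ne_zero : ∀ s : ℤ, s ≠ 0 →
      (RatFunc.X : RatFunc K) ^ s - (RatFunc.X : RatFunc K) ^ (-s) ≠ 0 := by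
    intro s hs h
    have : (RatFunc.X : RatFunc K) ^ (s - -s) = 1 := by
      rw [zpow_sub₀ hX, sub_eq_zero.mp h, div_self (zpow_ne_zero _ hX)]
    exact hs (by linarith [RatFunc.X_zpow_eq_one_iff.mp this])
  refine div_ne_zero (numerator_ne_zero t ht) ?_
  simpa using numerator_ne_zero 1 one_ne_zero

local notation "X" => (RatFunc.X : RatFunc ℚ)

lemma qIntZ_natCast (t : ℕ) : qIntZ X t = qInt t := by
  simp [qIntZ, qInt, zpow_neg, inv_pow]

lemma qInt_zero : qInt 0 = 0 := by simp [qInt]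

lemma qInt_ne_zero {t : ℕ} (ht : t ≠ 0) : qInt t ≠ 0 := by
  rw [← qIntZ_natCast]
  exact qIntZ_X_ne_zero (by exact_mod_cast ht)

lemma qFact_ne_zero (t : ℕ) : qFact t ≠ 0 :=
  prod_ne_zero_iff.mpr fun i _ => qInt_ne_zero i.succ_ne_zero

lemma qFact_zero : qFact 0 = 1 := prod_range_zero _

lemma qFact_succ (t : ℕ) : qFact (t + 1) = qFact t * qInt (t + 1) :=
  prod_range_succ _ t

lemma qBinom_of_le {a b : ℕ} (h : b ≤ a) : qBinom a b = qFact a / (qFact b * qFact (a - b)) :=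
  if_pos h

lemma qBinom_of_lt {a b : ℕ} (h : a < b) : qBinom a b = 0 :=
  if_neg h.not_ge

lemma qInt_succ_mul_qBinom_succ (a b : ℕ) :
    qInt (b + 1) * qBinom a (b + 1) = qInt (a - b) * qBinom a b := by
  rcases lt_or_ge b a with h | h
  · obtain ⟨c, rfl⟩ : ∃ c, a = b + 1 + c := ⟨a - (b + 1), by omega⟩
    rw [qBinom_of_le h, qBinom_of_le (by omega), show b + 1 + c - (b + 1) = c by omega,
      show b + 1 + c - b = c + 1 by omega, qFact_succ b, qFact_succ c]
    have := qFact_ne_zero b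
    have := qFact_ne_zero c
    have := qInt_ne_zero b.succ_ne_zero
    have := qInt_ne_zero c.succ_ne_zero
    field_simp
  · rw [qBinom_of_lt (by omega), Nat.sub_eq_zero_of_le h, qInt_zero, zero_mul, mul_zero]

lemma qInt_succ_sub_mul_qBinom_succ (a b : ℕ) :
    qInt (a + 1 - b) * qBinom (a + 1) b = qInt (a + 1) * qBinom a b := by
  rcases le_or_gt b a with h | h
  · obtain ⟨c, rfl⟩ : ∃ c, a = b + c := ⟨a - b, by omega⟩
    rw [qBinom_of_le h, qBinom_of_le (by omega), show b + c + 1 - b = c + 1 by omega,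
      show b + c - b = c by omega, qFact_succ (b + c), qFact_succ c]
    have := qFact_ne_zero b
    have := qFact_ne_zero c
    have := qInt_ne_zero c.succ_ne_zero
    field_simp
  · rw [qBinom_of_lt h, Nat.sub_eq_zero_of_le h, qInt_zero, zero_mul, mul_zero]

def qBinomZ (a b : ℤ) : RatFunc ℚ :=
  if 0 ≤ a ∧ 0 ≤ b then qBinom a.toNat b.toNat else 0

lemma qBinomZ_natCast (a b : ℕ) : qBinomZ a b = qBinom a b := by
  simp [qBinomZ]

lemma qBinomZ_of_neg {a b : ℤ} (hb : b < 0) : qBinomZ a b = 0 :=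
  if_neg fun h => hb.not_ge h.2

lemma qBinomZ_of_lt {a b : ℤ} (h : a < b) : qBinomZ a b = 0 := by
  unfold qBinomZ
  split_ifs with hab
  · exact qBinom_of_lt (by omega)
  · rfl

lemma qBinomZ_self {a : ℤ} (ha : 0 ≤ a) : qBinomZ a a = 1 := by
  lift a to ℕ using ha
  rw [qBinomZ_natCast, qBinom_of_le le_rfl, Nat.sub_self, qFact_zero, mul_one,
    div_self (qFact_ne_zero a)]

lemma qBinomZ_zero {a : ℤ} (ha : 0 ≤ a) : qBinomZ a 0 = 1 := by
  lift a to ℕ using ha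
  rw [← Nat.cast_zero, qBinomZ_natCast, qBinom_of_le (Nat.zero_le _), Nat.sub_zero, qFact_zero,
    one_mul, div_self (qFact_ne_zero a)]

lemma qIntZ_succ_mul_qBinomZ_succ (a b : ℤ) :
    qIntZ X (b + 1) * qBinomZ a (b + 1) = qIntZ X (a - b) * qBinomZ a b := by
  rcases lt_or_ge b 0 with hb | hb
  · rw [qBinomZ_of_neg hb, mul_zero]
    rcases (show b + 1 < 0 ∨ b + 1 = 0 by omega) with h | h
    · rw [qBinomZ_of_neg h, mul_zero]
    · rw [h, qIntZ_zero, zero_mul]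
  rcases lt_or_ge a b with hab | hba
  · rw [qBinomZ_of_lt hab, qBinomZ_of_lt (by omega), mul_zero, mul_zero]
  obtain ⟨A, rfl⟩ := Int.eq_ofNat_of_zero_le (hb.trans hba)
  obtain ⟨B, rfl⟩ := Int.eq_ofNat_of_zero_le hb
  have := qInt_succ_mul_qBinom_succ A B
  rw [← qIntZ_natCast, ← qIntZ_natCast, ← qBinomZ_natCast, ← qBinomZ_natCast] at this
  push_cast [show B ≤ A by omega] at this
  exact this

lemma qIntZ_succ_sub_mul_qBinomZ_succ (a b : ℤ) :
    qIntZ X (a + 1 - b) * qBinomZ (a + 1) b = qIntZ X (a + 1) * qBinomZ a b := by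
  rcases lt_or_ge b 0 with hb | hb
  · rw [qBinomZ_of_neg hb, qBinomZ_of_neg hb, mul_zero, mul_zero]
  rcases lt_or_ge a b with hab | hba
  · rw [qBinomZ_of_lt hab, mul_zero]
    rcases (show a + 1 < b ∨ a + 1 = b by omega) with h | h
    · rw [qBinomZ_of_lt h, mul_zero]
    · rw [h, sub_self, qIntZ_zero, zero_mul]
  obtain ⟨A, rfl⟩ := Int.eq_ofNat_of_zero_le (hb.trans hba)
  obtain ⟨B, rfl⟩ := Int.eq_ofNat_of_zero_le hb
  have := qInt_succ_sub_mul_qBinom_succ A B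
  rw [← qIntZ_natCast, ← qIntZ_natCast, ← qBinomZ_natCast, ← qBinomZ_natCast] at this
  push_cast [show B ≤ A + 1 by omega] at this
  exact this

def squareTerm (n m k l j : ℤ) : RatFunc ℚ :=
  qBinomZ l (k - j) * qBinomZ n (m - j) * qBinomZ (n + l + j) j

def squareCert (n m k l j : ℤ) : RatFunc ℚ :=
  qIntZ X (n + l + j - k)
    * (qBinomZ l (k + 1 - j) * qBinomZ n (m - j) * qBinomZ (n + l + j) (j - 1))

lemma qIntZ_mul_squareTerm_k_succ (n m k l j : ℤ) :
    qIntZ X (k + 1 - j) * squareTerm n m (k + 1) l j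
      = qIntZ X (l - k + j) * squareTerm n m k l j := by
  have h := qIntZ_succ_mul_qBinomZ_succ l (k - j)
  rw [show k - j + 1 = k + 1 - j by ring, show l - (k - j) = l - k + j by ring] at h
  simp only [squareTerm]
  linear_combination qBinomZ n (m - j) * qBinomZ (n + l + j) j * h

lemma qIntZ_mul_squareTerm_n_succ (n m k l j : ℤ) :
    qIntZ X (n + 1 - m + j) * qIntZ X (n + l + 1) * squareTerm (n + 1) m k l j
      = qIntZ X (n + 1) * qIntZ X (n + l + j + 1) * squareTerm n m k l j := by
  have h₁ := qIntZ_succ_sub_mul_qBinomZ_succ n (m - j)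
  have h₂ := qIntZ_succ_sub_mul_qBinomZ_succ (n + l + j) j
  rw [show n + 1 - (m - j) = n + 1 - m + j by ring] at h₁
  rw [show n + l + j + 1 - j = n + l + 1 by ring] at h₂
  simp only [squareTerm, show n + 1 + l + j = n + l + j + 1 by ring]
  linear_combination qBinomZ l (k - j) * (qIntZ X (n + l + 1) * qBinomZ (n + l + j + 1) j * h₁
    + qIntZ X (n + 1) * qBinomZ n (m - j) * h₂)

lemma qIntZ_mul_squareCert (n m k l j : ℤ) :
    qIntZ X (k + 1 - j) * qIntZ X (n + l + 1) * squareCert n m k l j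
      = qIntZ X (n + l + j - k) * qIntZ X (l - k + j) * qIntZ X j * squareTerm n m k l j := by
  have h₁ := qIntZ_succ_mul_qBinomZ_succ l (k - j)
  have h₂ := qIntZ_succ_mul_qBinomZ_succ (n + l + j) (j - 1)
  rw [show k - j + 1 = k + 1 - j by ring, show l - (k - j) = l - k + j by ring] at h₁
  rw [show j - 1 + 1 = j by ring, show n + l + j - (j - 1) = n + l + 1 by ring] at h₂
  simp only [squareCert, squareTerm]
  linear_combination qIntZ X (n + l + j - k) * qBinomZ n (m - j)
    * (qIntZ X (n + l + 1) * qBinomZ (n + l + j) (j - 1) * h₁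
      - qIntZ X (l - k + j) * qBinomZ l (k - j) * h₂)

lemma qIntZ_mul_squareCert_succ (n m k l j : ℤ) :
    qIntZ X (n + 1 - m + j) * qIntZ X (n + l + 1) * squareCert n m k l (j + 1)
      = qIntZ X (n + l + j + 1 - k) * qIntZ X (m - j) * qIntZ X (n + l + j + 1)
        * squareTerm n m k l j := by
  have h₁ := qIntZ_succ_mul_qBinomZ_succ n (m - j - 1)
  have h₂ := qIntZ_succ_sub_mul_qBinomZ_succ (n + l + j) j
  rw [show m - j - 1 + 1 = m - j by ring, show n - (m - j - 1) = n + 1 - m + j by ring] at h₁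
  rw [show n + l + j + 1 - j = n + l + 1 by ring] at h₂
  simp only [squareCert, squareTerm, show k + 1 - (j + 1) = k - j by ring,
    show m - (j + 1) = m - j - 1 by ring, show n + l + (j + 1) = n + l + j + 1 by ring,
    show j + 1 - 1 = j by ring]
  linear_combination qIntZ X (n + l + j + 1 - k) * qBinomZ l (k - j)
    * (qIntZ X (m - j) * qBinomZ n (m - j) * h₂
      - qIntZ X (n + l + 1) * qBinomZ (n + l + j + 1) j * h₁)

lemma squareTerm_telescope_of_ne (n m k l j : ℤ) (hn : 0 ≤ n) (hl : 0 ≤ l) (hj : j ≠ k + 1)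
    (hmj : m - j ≠ n + 1) :
    qIntZ X (k + 1) * squareTerm n m (k + 1) l j - qIntZ X (m + l - k) * squareTerm (n + 1) m k l j
      = squareCert n m k l j - squareCert n m k l (j + 1) := by
  have hc : qIntZ X (k + 1 - j) * qIntZ X (n + 1 - m + j) * qIntZ X (n + l + 1) ≠ 0 :=
    mul_ne_zero (mul_ne_zero (qIntZ_X_ne_zero (by omega)) (qIntZ_X_ne_zero (by omega)))
      (qIntZ_X_ne_zero (by omega))
  apply mul_left_cancel₀ hc
  linear_combination
    qIntZ X (k + 1) * qIntZ X (n + 1 - m + j) * qIntZ X (n + l + 1)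
        * qIntZ_mul_squareTerm_k_succ n m k l j
      - qIntZ X (m + l - k) * qIntZ X (k + 1 - j) * qIntZ_mul_squareTerm_n_succ n m k l j
      - qIntZ X (n + 1 - m + j) * qIntZ_mul_squareCert n m k l j
      + qIntZ X (k + 1 - j) * qIntZ_mul_squareCert_succ n m k l j
      + squareTerm n m k l j * qIntZ_four_term_identity (q := X) RatFunc.X_ne_zero n m k l j

lemma squareTerm_telescope (n m k l j : ℤ) (hn : 0 ≤ n) (hl : 0 ≤ l) :
    qIntZ X (k + 1) * squareTerm n m (k + 1) l j - qIntZ X (m + l - k) * squareTerm (n + 1) m k l j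
      = squareCert n m k l j - squareCert n m k l (j + 1) := by
  by_cases hj : j = k + 1
  · subst hj
    simp only [squareTerm, squareCert, sub_self, add_sub_cancel_right,
      qBinomZ_of_neg (show k - (k + 1) < 0 by omega),
      qBinomZ_of_neg (show k + 1 - (k + 1 + 1) < 0 by omega)]
    linear_combination qBinomZ l 0 * qBinomZ n (m - (k + 1))
      * qIntZ_succ_mul_qBinomZ_succ (n + l + (k + 1)) k
  by_cases hmj : m - j = n + 1
  · obtain rfl : m = n + 1 + j := by omega
    simp only [squareTerm, squareCert, show n + 1 + j - j = n + 1 by ring,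
      show n + 1 + j - (j + 1) = n by ring, qBinomZ_of_lt (lt_add_one n), qBinomZ_self hn,
      qBinomZ_self (show 0 ≤ n + 1 by omega)]
    ring_nf
  exact squareTerm_telescope_of_ne n m k l j hn hl hj hmj

lemma qIntZ_mul_sum_squareTerm_succ (m : ℕ) (n k l : ℤ) (hn : 0 ≤ n) (hl : 0 ≤ l) :
    qIntZ X (k + 1) * ∑ j ∈ range (m + 1), squareTerm n m (k + 1) l j
      = qIntZ X (m + l - k) * ∑ j ∈ range (m + 1), squareTerm (n + 1) m k l j := by
  rw [← sub_eq_zero, mul_sum, mul_sum, ← sum_sub_distrib]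
  rw [sum_congr rfl fun (j : ℕ) _ => squareTerm_telescope n m k l j hn hl]
  have := sum_range_sub' (fun j : ℕ => squareCert n m k l j) (m + 1)
  push_cast at this
  rw [this, sub_eq_zero]
  simp only [squareCert]
  rw [qBinomZ_of_neg (show (0 : ℤ) - 1 < 0 by omega),
    qBinomZ_of_neg (show (m : ℤ) - (m + 1) < 0 by omega)]
  ring

theorem qBinomZ_mul_qBinomZ_eq_sum_squareTerm (k m : ℕ) {n l : ℤ} (hn : 0 ≤ n)
    (hl : 0 ≤ l) :
    qBinomZ (n + k) m * qBinomZ (m + l) k = ∑ j ∈ range (m + 1), squareTerm n m k l j := by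
  induction k generalizing n with
  | zero =>
    rw [sum_eq_single 0 (fun j _ hj => ?_) (by simp)]
    · simp [squareTerm, qBinomZ_zero hl, qBinomZ_zero (show 0 ≤ (m : ℤ) + l by omega),
        qBinomZ_zero (show 0 ≤ n + l by omega)]
    · rw [squareTerm, qBinomZ_of_neg (by omega), zero_mul, zero_mul]
  | succ k ih =>
    apply mul_left_cancel₀ (qIntZ_X_ne_zero (show (k : ℤ) + 1 ≠ 0 by omega))
    push_cast
    calc qIntZ X (k + 1) * (qBinomZ (n + (k + 1)) m * qBinomZ (m + l) (k + 1))
        = qIntZ X (m + l - k) * (qBinomZ (n + 1 + k) m * qBinomZ (m + l) k) := by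
          rw [show n + (k + 1) = n + 1 + k by ring]
          linear_combination qBinomZ (n + 1 + k) m * qIntZ_succ_mul_qBinomZ_succ (m + l) k
      _ = qIntZ X (m + l - k) * ∑ j ∈ range (m + 1), squareTerm (n + 1) m k l j := by
          rw [ih (by omega)]
      _ = qIntZ X (k + 1) * ∑ j ∈ range (m + 1), squareTerm n m (k + 1) l j :=
          (qIntZ_mul_sum_squareTerm_succ m n k l hn hl).symm

theorem qbinom_square_identity (n m k l : ℕ) :
    qBinom (n + k) m * qBinom (m + l) k =
      ∑ j ∈ Finset.range (min m k + 1),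
        qBinom l (k - j) * qBinom n (m - j) * qBinom (n + l + j) j := by
  calc qBinom (n + k) m * qBinom (m + l) k = qBinomZ (n + k) m * qBinomZ (m + l) k := by
        simp only [← Nat.cast_add, qBinomZ_natCast]
    _ = ∑ j ∈ range (m + 1), squareTerm n m k l j :=
        qBinomZ_mul_qBinomZ_eq_sum_squareTerm k m (by positivity) (by positivity)
    _ = ∑ j ∈ range (min m k + 1), squareTerm n m k l j := by
        refine (sum_subset (range_subset_range.mpr (by omega)) fun j hj hjk => ?_).symm
        simp only [mem_range] at hj hjk
        rw [squareTerm, qBinomZ_of_neg (by omega), zero_mul, zero_mul]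
    _ = _ := by
        refine sum_congr rfl fun j hj => ?_
        have : j ≤ k ∧ j ≤ m := by simp only [mem_range] at hj; omega
        simp only [squareTerm, ← Nat.cast_sub this.1, ← Nat.cast_sub this.2, ← Nat.cast_add,
          qBinomZ_natCast]

end
end

section
/- Let λ, μ ∈ T(k, N−1), and let λ^c denote the complementary partition of λ in the k×(N−1) rectangle, i.e. (λ^c)_i = (N−1) − λ_{k+1−i} for 1 ≤ i ≤ k. Then: (i) ε_{N,k}([m̃_λ]·[m̃_{λ^c}]) is the nonzero positive integer equal to the number of pairs (σ,τ) ∈ 𝔖_k × 𝔖_k with λ_{σ(i)} + (λ^c)_{τ(i)} = N−1 for all i, namely k!·∏_{c≥0} m_c(λ)!, where m_c(λ) is the number of indices i ∈ {1,…,k} with λ_i = c; (ii) if |λ| + |μ| ≤ k(N−1) and μ ≠ λ^c, then ε_{N,k}([m̃_λ]·[m̃_μ]) = 0. Here [·] denotes the class in M_{N,k}. Consequently the Gram matrix of the pairing (a,b) ↦ ε_{N,k}(ab) in the bases ([m̃_λ])_{λ∈T(k,N−1)} and ([m̃_{μ^c}])_{μ∈T(k,N−1)} is triangular with invertible diagonal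 entries. -/
/-!
STATEMENT 4: Let `λ, μ ∈ T(k, N−1)` and `λ^c` the complementary partition of `λ` in the
`k×(N−1)` rectangle.  Then (i) `ε_{N,k}([m̃_λ]·[m̃_{λ^c}])` is the positive integer equal to
the number of pairs `(σ,τ) ∈ 𝔖_k × 𝔖_k` with `λ_{σ(i)} + (λ^c)_{τ(i)} = N−1` for all `i`,
namely `k!·∏_{c≥0} m_c(λ)!`; and (ii) if `|λ| + |μ| ≤ k(N−1)` and `μ ≠ λ^c` then
`ε_{N,k}([m̃_λ]·[m̃_μ]) = 0`.  Here `m̃_λ = Σ_{σ∈𝔖_k} ∏_i x_i^{λ_{σ(i)}}` and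
`ε_{N,k}` is given (as a hypothesis) by the `R_N`-basis of classes of monomial symmetric
polynomials, sending the class of `m_{ρ(k,N−1)}` to `1` and the other basis elements to `0`.

Setup: the ambient ring is `ℚ[T_1,…,T_N,x_1,…,x_k]`, realized as
`MvPolynomial (Fin N ⊕ Fin k) ℚ` (`Sum.inl i ↦ T_i`, `Sum.inr j ↦ x_j`).
`Bsub = R_N[x_1,…,x_k]` is the subalgebra of polynomials symmetric in the `T`-variables,
`Asub = A_k` consists of those symmetric both in the `T`- and the `x`-variables,
`Jid = J_{N,k}` is the ideal of `Bsub` generated by the `∏_{i=1}^N (x_j − T_i)`,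
`JA = J_{N,k} ∩ A_k`, and `M_{N,k} = Asub ⧸ JA`, an algebra over
`R_N = ℚ[T_1,…,T_N]^{𝔖_N}`.
-/

open MvPolynomial

set_option synthInstance.maxHeartbeats 1000000
set_option maxHeartbeats 1600000

noncomputable section
namespace SymKR

variable (N k : ℕ)

/-- The ambient polynomial ring `ℚ[T_1,…,T_N,x_1,…,x_k]`. -/
abbrev Amb := MvPolynomial (Fin N ⊕ Fin k) ℚ

/-- The action of a permutation of `{1,…,N}` on the `T`-variables. -/
def actT (σ : Equiv.Perm (Fin N)) : Amb N k →ₐ[ℚ] Amb N k :=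
  rename (Sum.map (⇑σ) id)

/-- The action of a permutation of `{1,…,k}` on the `x`-variables. -/
def actX (τ : Equiv.Perm (Fin k)) : Amb N k →ₐ[ℚ] Amb N k :=
  rename (Sum.map id (⇑τ))

/-- `R_N[x_1,…,x_k]`: polynomials symmetric in the `T`-variables. -/
def Bsub : Subalgebra ℚ (Amb N k) :=
  ⨅ σ : Equiv.Perm (Fin N), AlgHom.equalizer (actT N k σ) (AlgHom.id ℚ _)

/-- `A_k = R_N[x_1,…,x_k]^{𝔖_k}`. -/
def Asub : Subalgebra ℚ (Amb N k) :=
  Bsub N k ⊓ ⨅ τ : Equiv.Perm (Fin k), AlgHom.equalizer (actX N k τ) (AlgHom.id ℚ _)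

lemma mem_Bsub {p : Amb N k} : p ∈ Bsub N k ↔ ∀ σ, actT N k σ p = p := by
  simp [Bsub, Algebra.mem_iInf, AlgHom.mem_equalizer]

lemma mem_Asub {p : Amb N k} :
    p ∈ Asub N k ↔ (∀ σ, actT N k σ p = p) ∧ (∀ τ, actX N k τ p = p) := by
  simp [Asub, Algebra.mem_inf, mem_Bsub, Algebra.mem_iInf, AlgHom.mem_equalizer]

/-- The generator `∏_{i=1}^N (x_j − T_i)` of `J_{N,k}`. -/
def pgen (j : Fin k) : Amb N k :=
  ∏ i : Fin N, (X (Sum.inr j) - X (Sum.inl i))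

/-- The ideal `J_{N,k}` of `R_N[x_1,…,x_k]`. -/
def Jid : Ideal (Bsub N k) :=
  Ideal.span {b : Bsub N k | ∃ j : Fin k, (b : Amb N k) = pgen N k j}

lemma Asub_le_Bsub : Asub N k ≤ Bsub N k := inf_le_left

/-- The ideal `J_{N,k} ∩ A_k` of `A_k`. -/
def JA : Ideal (Asub N k) :=
  (Jid N k).comap (Subalgebra.inclusion (Asub_le_Bsub N k))

/-- `R_N = ℚ[T_1,…,T_N]^{𝔖_N}`. -/
abbrev R0 := MvPolynomial.symmetricSubalgebra (Fin N) ℚ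

lemma inl_mem (r : R0 N) :
    rename (Sum.inl : Fin N → Fin N ⊕ Fin k) (r : MvPolynomial (Fin N) ℚ) ∈ Asub N k := by
  rw [mem_Asub]
  constructor
  · intro σ
    show rename _ (rename _ _) = _
    rw [rename_rename]
    have h1 : (Sum.map (⇑σ) id ∘ Sum.inl : Fin N → Fin N ⊕ Fin k) = Sum.inl ∘ ⇑σ := rfl
    rw [h1, ← rename_rename]
    congr 1
    exact (MvPolynomial.mem_symmetricSubalgebra _).mp r.2 σ
  · intro τ
    show rename _ (rename _ _) = _
    rw [rename_rename]
    rfl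

/-- The structure map `R_N → A_k`. -/
def toA : R0 N →+* Asub N k where
  toFun r := ⟨rename Sum.inl (r : MvPolynomial (Fin N) ℚ), inl_mem N k r⟩
  map_one' := Subtype.ext <| by simp
  map_mul' r s := Subtype.ext <| by simp [MulMemClass.coe_mul]
  map_zero' := Subtype.ext <| by simp
  map_add' r s := Subtype.ext <| by simp [AddMemClass.coe_add]

/-- `M_{N,k}` is an `R_N`-algebra (in particular an `R_N`-module). -/
instance instAlgR0M : Algebra (R0 N) ((Asub N k) ⧸ JA N k) :=
  @RingHom.toAlgebra _ _ _ (inferInstance : CommRing ((Asub N k) ⧸ JA N k)).toCommSemiring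
    ((Ideal.Quotient.mk (JA N k)).comp (toA N k))

/-- The monomial symmetric polynomial `m_lam(x_1,…,x_k)`: the sum over the *distinct*
permutations of the exponent vector `lam`. -/
def msym (lam : Fin k → ℕ) : Amb N k :=
  ∑ v ∈ Finset.image (fun σ : Equiv.Perm (Fin k) => lam ∘ σ) Finset.univ,
    ∏ i, (X (Sum.inr i) : Amb N k) ^ v i

lemma msym_mem (lam : Fin k → ℕ) : msym N k lam ∈ Asub N k := by
  rw [mem_Asub]
  constructor
  · intro σ
    rw [msym, map_sum]
    refine Finset.sum_congr rfl fun v _ => ?_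
    rw [map_prod]
    refine Finset.prod_congr rfl fun i _ => ?_
    rw [map_pow]
    show (rename _ (X (Sum.inr i)) : Amb N k) ^ _ = _
    rw [rename_X]
    rfl
  · intro τ
    rw [msym, map_sum]
    have key : ∀ v : Fin k → ℕ,
        actX N k τ (∏ i, (X (Sum.inr i) : Amb N k) ^ v i)
          = ∏ i, (X (Sum.inr i) : Amb N k) ^ v (τ.symm i) := by
      intro v
      rw [map_prod]
      refine Fintype.prod_equiv τ _ _ fun i => ?_
      rw [map_pow]
      show (rename _ (X (Sum.inr i)) : Amb N k) ^ _ = _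
      rw [rename_X]
      simp
    rw [Finset.sum_congr rfl fun v _ => key v]
    refine Finset.sum_bij' (fun v _ => v ∘ ⇑τ.symm) (fun v _ => v ∘ ⇑τ) ?_ ?_ ?_ ?_ ?_
    · intro v hv
      rw [Finset.mem_image] at hv ⊢
      obtain ⟨σ, -, rfl⟩ := hv
      exact ⟨τ.symm.trans σ, Finset.mem_univ _, rfl⟩
    · intro v hv
      rw [Finset.mem_image] at hv ⊢
      obtain ⟨σ, -, rfl⟩ := hv
      exact ⟨τ.trans σ, Finset.mem_univ _, rfl⟩
    · intro v _
      funext i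
      simp [Function.comp]
    · intro v _
      funext i
      simp [Function.comp]
    · intro v _
      rfl

/-- `T(k, N−1)`: partitions with at most `k` parts, each part at most `N−1`, encoded as
antitone functions `Fin k → ℕ` bounded by `N−1`. -/
def PartIdx := {lam : Fin k → ℕ // Antitone lam ∧ ∀ i, lam i ≤ N - 1}

/-- The class of `m_lam` in `M_{N,k}`. -/
def clsm (lam : Fin k → ℕ) : (Asub N k) ⧸ JA N k :=
  Ideal.Quotient.mk (JA N k) ⟨msym N k lam, msym_mem N k lam⟩

instance instModR0M : Module (R0 N) ((Asub N k) ⧸ JA N k) := by exact (instAlgR0M N k).toModule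

/-- `m̃_lam`: the sum over all `k!` permutations, with multiplicity. -/
def mtil (lam : Fin k → ℕ) : Amb N k :=
  ∑ σ : Equiv.Perm (Fin k), ∏ i, (X (Sum.inr i) : Amb N k) ^ lam (σ i)

lemma mtil_mem (lam : Fin k → ℕ) : mtil N k lam ∈ Asub N k := by
  rw [mem_Asub]
  constructor
  · intro σ
    rw [mtil, map_sum]
    refine Finset.sum_congr rfl fun ρ _ => ?_
    rw [map_prod]
    refine Finset.prod_congr rfl fun i _ => ?_
    rw [map_pow]
    show (rename _ (X (Sum.inr i)) : Amb N k) ^ _ = _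
    rw [rename_X]
    rfl
  · intro τ
    rw [mtil, map_sum]
    have key : ∀ σ : Equiv.Perm (Fin k),
        actX N k τ (∏ i, (X (Sum.inr i) : Amb N k) ^ lam (σ i))
          = ∏ i, (X (Sum.inr i) : Amb N k) ^ lam ((σ * τ.symm) i) := by
      intro σ
      rw [map_prod]
      refine Fintype.prod_equiv τ _ _ fun i => ?_
      rw [map_pow]
      show (rename _ (X (Sum.inr i)) : Amb N k) ^ _ = _
      rw [rename_X]
      simp [Equiv.Perm.mul_apply]
    rw [Finset.sum_congr rfl fun σ _ => key σ]
    exact Fintype.sum_equiv (Equiv.mulRight τ.symm) _ _ fun σ => rfl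

/-- The class of `m̃_lam` in `M_{N,k}`. -/
def clst (lam : Fin k → ℕ) : (Asub N k) ⧸ JA N k :=
  Ideal.Quotient.mk (JA N k) ⟨mtil N k lam, mtil_mem N k lam⟩

/-- The complementary partition `λ^c` of `λ` in the `k × (N−1)` rectangle:
`(λ^c)_i = (N−1) − λ_{k+1−i}`. -/
def lamC (lam : Fin k → ℕ) : Fin k → ℕ := fun i => (N - 1) - lam i.rev

/-- The number of pairs `(σ,τ) ∈ 𝔖_k × 𝔖_k` such that
`λ_{σ(i)} + (λ^c)_{τ(i)} = N−1` for all `i`. -/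
def pairCount (lam : Fin k → ℕ) : ℕ :=
  (Finset.univ.filter fun p : Equiv.Perm (Fin k) × Equiv.Perm (Fin k) =>
      ∀ i, lam (p.1 i) + lamC N k lam (p.2 i) = N - 1).card

/-- `m_c(λ)`: the number of indices `i` with `λ_i = c`. -/
def multCount (lam : Fin k → ℕ) (c : ℕ) : ℕ :=
  (Finset.univ.filter fun i => lam i = c).card

/-!
Multiplying out gives `m̃_λ · m̃_μ = ∑_π m̃_{λ + μ∘π}`, so everything reduces to the value of `ε`
on a single class `[m̃_ν]` with `|ν| ≤ k(N−1)`. If every part of `ν` is at most `N−1`, then `m̃_ν`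
is an integer multiple of `m` of the sorted `ν`, which `ε` sees only for `ν = ρ(k,N−1)`, where
the multiple is `k!`. Otherwise some `x_j` occurs to a power `≥ N`; modulo `J_{N,k}`, Vieta writes
`x_j^N` as an `R_N`-combination of lower powers of `x_j`, which expresses `[m̃_ν]` through classes
of strictly smaller degree, hence of degree `< k(N−1)`, on which `ε` vanishes. Therefore
`ε([m̃_λ][m̃_μ]) = k! · #{π | λ_j + μ_{π j} = N−1 ∀ j}`. For `μ = λ^c` these `π` are the reversal
composed with the stabilizer of `λ`; for an antitone `μ ≠ λ^c` there are none, since `μ` would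
be a rearrangement of `λ^c`.
-/

open scoped Finset Nat

lemma card_filter_comp_eq_card_stabilizer {α β : Type*} [Fintype α] [DecidableEq α]
    [DecidableEq β] (w : α → β) (σ₀ : Equiv.Perm α) :
    #{σ : Equiv.Perm α | w ∘ σ = w ∘ σ₀} = Fintype.card {g : Equiv.Perm α // w ∘ g = w} := by
  rw [Fintype.card_subtype]
  refine Finset.card_equiv (Equiv.mulRight σ₀⁻¹) fun σ => ?_
  simp only [Finset.mem_filter, Finset.mem_univ, true_and, Equiv.coe_mulRight,
    Equiv.Perm.coe_mul]
  rw [← (Equiv.surjective σ₀⁻¹).injective_comp_right.eq_iff]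
  simp [Function.comp_assoc]

lemma card_perm_pairs_eq_factorial_mul {α : Type*} [Fintype α] [DecidableEq α] (f g : α → ℕ)
    (n : ℕ) [DecidablePred fun p : Equiv.Perm α × Equiv.Perm α => ∀ i, f (p.1 i) + g (p.2 i) = n]
    [DecidablePred fun π : Equiv.Perm α => ∀ i, f i + g (π i) = n] :
    #{p : Equiv.Perm α × Equiv.Perm α | ∀ i, f (p.1 i) + g (p.2 i) = n}
      = (Fintype.card α)! * #{π : Equiv.Perm α | ∀ i, f i + g (π i) = n} := by
  rw [← Fintype.card_perm, ← Finset.card_univ, ← Finset.card_product]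
  refine Finset.card_equiv (Equiv.prodShear (Equiv.refl _) fun σ => Equiv.mulRight σ⁻¹)
    fun p => ?_
  simp only [Finset.mem_filter, Finset.mem_univ, Finset.mem_product, true_and]
  conv_rhs => rw [← p.1.forall_congr_right]
  simp

lemma exists_perm_antitone_comp (ν : Fin k → ℕ) : ∃ g : Equiv.Perm (Fin k), Antitone (ν ∘ g) :=
  ⟨Tuple.sort ν * Fin.revPerm, fun _ _ hij => Tuple.monotone_sort ν (Fin.rev_le_rev.2 hij)⟩

def xMono (e : Fin k → ℕ) : Amb N k := ∏ i, X (Sum.inr i) ^ e i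

lemma xMono_add (e f : Fin k → ℕ) : xMono N k (e + f) = xMono N k e * xMono N k f := by
  simp only [xMono, Pi.add_apply, pow_add, Finset.prod_mul_distrib]

lemma xMono_single (j : Fin k) (a : ℕ) : xMono N k (Pi.single j a) = X (Sum.inr j) ^ a := by
  rw [xMono, Finset.prod_eq_single j (fun i _ hi => by rw [Pi.single_eq_of_ne hi, pow_zero])
    (by simp), Pi.single_eq_same]

lemma X_inr_mem_Bsub (j : Fin k) : (X (Sum.inr j) : Amb N k) ∈ Bsub N k :=
  (mem_Bsub N k).2 fun _ => rename_X _ _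

lemma xMono_mem_Bsub (e : Fin k → ℕ) : xMono N k e ∈ Bsub N k :=
  Subalgebra.prod_mem _ fun j _ => pow_mem (X_inr_mem_Bsub N k j) _

lemma pgen_mem_Bsub (j : Fin k) : pgen N k j ∈ Bsub N k := by
  refine (mem_Bsub N k).2 fun σ => ?_
  simp only [pgen, actT, map_prod, map_sub, rename_X, Sum.map_inl, Sum.map_inr, id_eq]
  exact Equiv.prod_comp σ fun i => (X (Sum.inr j) : Amb N k) - X (Sum.inl i)

lemma pgen_eq_sum_esymm (j : Fin k) :
    pgen N k j = ∑ t ∈ Finset.range (N + 1),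
      (-1) ^ t * (rename Sum.inl (esymm (Fin N) ℚ t) * X (Sum.inr j) ^ (N - t)) := by
  have h := congrArg (Polynomial.eval (X (Sum.inr j) : Amb N k))
    (Multiset.prod_X_sub_X_eq_sum_esymm
      (Finset.univ.val.map fun i : Fin N => (X (Sum.inl i) : Amb N k)))
  simp only [Polynomial.eval_multiset_prod, Multiset.map_map, Function.comp_def,
    Polynomial.eval_sub, Polynomial.eval_X, Polynomial.eval_C, Polynomial.eval_finsetSum,
    Polynomial.eval_mul, Polynomial.eval_pow, Polynomial.eval_neg, Polynomial.eval_one,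
    Multiset.card_map, Finset.card_val, Finset.card_univ, Fintype.card_fin] at h
  rw [pgen, Finset.prod_eq_multiset_prod, h]
  simp only [rename_eq_aeval, Function.comp_def, aeval_esymm_eq_multiset_esymm]

lemma exists_X_pow_eq_pgen_add : ∃ c : ℕ → R0 N, ∀ j : Fin k,
    (X (Sum.inr j) : Amb N k) ^ N = pgen N k j
      + ∑ s ∈ Finset.range N,
          rename Sum.inl (c s : MvPolynomial (Fin N) ℚ) * X (Sum.inr j) ^ s := by
  refine ⟨fun s => -((-1) ^ (N - s) * ⟨esymm (Fin N) ℚ (N - s),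
    (mem_symmetricSubalgebra _).2 (esymm_isSymmetric _ _ _)⟩), fun j => ?_⟩
  rw [pgen_eq_sum_esymm, ← Finset.sum_range_reflect, Finset.sum_range_succ, add_right_comm,
    ← Finset.sum_add_distrib, Finset.sum_eq_zero fun s hs => ?_]
  · simp
  · have : N - (N - s) = s := by have := Finset.mem_range.1 hs; omega
    simp [this, mul_assoc]

lemma mtil_eq_sum_xMono (ν : Fin k → ℕ) :
    mtil N k ν = ∑ σ : Equiv.Perm (Fin k), xMono N k (ν ∘ σ) :=
  rfl

lemma mtil_add_single (ν : Fin k → ℕ) (j : Fin k) (a : ℕ) :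
    mtil N k (ν + Pi.single j a)
      = ∑ σ : Equiv.Perm (Fin k), xMono N k (ν ∘ σ) * X (Sum.inr (σ⁻¹ j)) ^ a := by
  refine Finset.sum_congr rfl fun σ _ => ?_
  have : (ν + Pi.single j a) ∘ σ = ν ∘ σ + Pi.single (σ⁻¹ j) a := by
    ext i
    simp [Pi.single_apply, Equiv.eq_symm_apply]
  rw [← xMono_single, ← xMono_add, ← this]
  rfl

lemma mtil_mul (lam mu : Fin k → ℕ) :
    mtil N k lam * mtil N k mu = ∑ π : Equiv.Perm (Fin k), mtil N k (lam + mu ∘ π) := by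
  simp only [mtil_eq_sum_xMono, Finset.sum_mul_sum]
  conv_rhs => rw [Finset.sum_comm]
  refine Finset.sum_congr rfl fun σ _ => ?_
  refine (Fintype.sum_equiv (Equiv.mulRight σ) _ _ fun π => ?_).symm
  rw [Pi.add_comp, xMono_add]
  rfl

lemma mtil_comp_perm (ν : Fin k → ℕ) (g : Equiv.Perm (Fin k)) : mtil N k (ν ∘ g) = mtil N k ν :=
  Fintype.sum_equiv (Equiv.mulLeft g) _ _ fun _ => rfl

lemma mtil_eq_card_stabilizer_smul_msym (w : Fin k → ℕ) :
    mtil N k w = Fintype.card {g : Equiv.Perm (Fin k) // w ∘ g = w} • msym N k w := by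
  rw [mtil_eq_sum_xMono, msym, Finset.smul_sum,
    Finset.sum_comp (xMono N k) fun σ : Equiv.Perm (Fin k) => w ∘ σ]
  refine Finset.sum_congr rfl fun v hv => ?_
  obtain ⟨σ₀, -, rfl⟩ := Finset.mem_image.1 hv
  rw [card_filter_comp_eq_card_stabilizer]
  rfl

lemma mem_JA_of_coe_eq_sum {ι : Type*} [Fintype ι] (a : Asub N k) (c : ι → Amb N k)
    (hc : ∀ i, c i ∈ Bsub N k) (j : ι → Fin k) (h : (a : Amb N k) = ∑ i, c i * pgen N k (j i)) :
    a ∈ JA N k := by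
  have : Subalgebra.inclusion (Asub_le_Bsub N k) a
      = ∑ i, (⟨c i, hc i⟩ : Bsub N k) * ⟨pgen N k (j i), pgen_mem_Bsub N k (j i)⟩ :=
    Subtype.ext (by simpa using h)
  rw [JA, Ideal.mem_comap, this]
  exact Ideal.sum_mem _ fun i _ => Ideal.mul_mem_left _ _ (Ideal.subset_span ⟨j i, rfl⟩)

lemma smul_mk (r : R0 N) (a : Asub N k) :
    r • Ideal.Quotient.mk (JA N k) a = Ideal.Quotient.mk (JA N k) (toA N k r * a) := by
  rw [Algebra.smul_def]
  rfl

lemma coe_toA (r : R0 N) :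
    ((toA N k r : Asub N k) : Amb N k) = rename Sum.inl (r : MvPolynomial (Fin N) ℚ) := rfl

lemma clst_add_single {c : ℕ → R0 N} (hc : ∀ j : Fin k, (X (Sum.inr j) : Amb N k) ^ N
      = pgen N k j + ∑ s ∈ Finset.range N,
          rename Sum.inl (c s : MvPolynomial (Fin N) ℚ) * X (Sum.inr j) ^ s)
    (ν : Fin k → ℕ) (j : Fin k) :
    clst N k (ν + Pi.single j N) = ∑ s ∈ Finset.range N, c s • clst N k (ν + Pi.single j s) := by
  simp only [clst, smul_mk, ← map_sum]
  refine Ideal.Quotient.eq.2 (mem_JA_of_coe_eq_sum N k _ _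
    (fun σ : Equiv.Perm (Fin k) => xMono_mem_Bsub N k (ν ∘ σ)) (fun σ => σ⁻¹ j) ?_)
  simp only [AddSubgroupClass.coe_sub, AddSubmonoidClass.coe_finsetSum, MulMemClass.coe_mul,
    coe_toA, mtil_add_single, hc, mul_add, Finset.sum_add_distrib, Finset.mul_sum]
  rw [Finset.sum_comm (s := Finset.range N)]
  simp only [mul_left_comm, add_sub_cancel_right]

lemma clst_mul (lam mu : Fin k → ℕ) :
    clst N k lam * clst N k mu = ∑ π : Equiv.Perm (Fin k), clst N k (lam + mu ∘ π) := by
  simp only [clst, ← map_mul, ← map_sum]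
  exact congrArg _ (Subtype.ext (by simpa using mtil_mul N k lam mu))

lemma clst_comp_perm (ν : Fin k → ℕ) (g : Equiv.Perm (Fin k)) :
    clst N k (ν ∘ g) = clst N k ν := by
  unfold clst
  exact congrArg _ (Subtype.ext (mtil_comp_perm N k ν g))

lemma clst_eq_card_stabilizer_smul_clsm (w : Fin k → ℕ) :
    clst N k w = Fintype.card {g : Equiv.Perm (Fin k) // w ∘ g = w} • clsm N k w := by
  rw [clsm, ← map_nsmul]
  exact congrArg _ (Subtype.ext (by simpa using mtil_eq_card_stabilizer_smul_msym N k w))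

lemma eps_clst_of_le (eps : ((Asub N k) ⧸ JA N k) →ₗ[R0 N] R0 N)
    (heps_rho : eps (clsm N k (fun _ => N - 1)) = 1)
    (heps_zero : ∀ lam : PartIdx N k, lam.1 ≠ (fun _ => N - 1) → eps (clsm N k lam.1) = 0)
    {ν : Fin k → ℕ} (hν : ∀ i, ν i ≤ N - 1) :
    eps (clst N k ν) = if ν = (fun _ => N - 1) then (k ! : R0 N) else 0 := by
  split_ifs with h
  · subst h
    rw [clst_eq_card_stabilizer_smul_clsm, map_nsmul, heps_rho]
    simp [Function.comp_def, Fintype.card_perm]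
  · obtain ⟨g, hg⟩ := exists_perm_antitone_comp k ν
    have hne : ν ∘ g ≠ fun _ => N - 1 := fun hc =>
      h (funext fun i => by simpa using congrFun hc (g⁻¹ i))
    rw [← clst_comp_perm N k ν g, clst_eq_card_stabilizer_smul_clsm, map_nsmul,
      heps_zero ⟨ν ∘ g, hg, fun i => hν (g i)⟩ hne, smul_zero]

lemma sum_add_single (ν : Fin k → ℕ) (j : Fin k) (a : ℕ) :
    ∑ i, (ν + Pi.single j a : Fin k → ℕ) i = ∑ i, ν i + a := by
  simp [Finset.sum_add_distrib]

lemma eps_clst (eps : ((Asub N k) ⧸ JA N k) →ₗ[R0 N] R0 N)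
    (heps_rho : eps (clsm N k (fun _ => N - 1)) = 1)
    (heps_zero : ∀ lam : PartIdx N k, lam.1 ≠ (fun _ => N - 1) → eps (clsm N k lam.1) = 0)
    {ν : Fin k → ℕ} (hν : ∑ i, ν i ≤ k * (N - 1)) :
    eps (clst N k ν) = if ν = (fun _ => N - 1) then (k ! : R0 N) else 0 := by
  obtain ⟨c, hc⟩ := exists_X_pow_eq_pgen_add N k
  induction hn : ∑ i, ν i using Nat.strong_induction_on generalizing ν with
  | _ n ih =>
  by_cases hle : ∀ i, ν i ≤ N - 1
  · exact eps_clst_of_le N k eps heps_rho heps_zero hle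
  obtain ⟨j, hj⟩ := not_forall.1 hle
  rw [not_le] at hj
  have hne : ν ≠ fun _ => N - 1 := fun h => by simp [h] at hj
  obtain ⟨ν, rfl⟩ : ∃ ν', ν = ν' + Pi.single j N :=
    ⟨ν - Pi.single j N, funext fun i => by
      rcases eq_or_ne i j with rfl | hi <;> simp [*]; omega⟩
  rw [if_neg hne, clst_add_single N k hc, map_sum]
  refine Finset.sum_eq_zero fun s hs => ?_
  have hs := Finset.mem_range.1 hs
  rw [sum_add_single] at hn hν
  have hlt : ∑ i, (ν + Pi.single j s : Fin k → ℕ) i < k * (N - 1) := by rw [sum_add_single]; omega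
  rw [map_smul, ih _ (by rw [sum_add_single]; omega) hlt.le rfl, if_neg, smul_zero]
  rintro h
  rw [h] at hlt
  simp at hlt

lemma eps_clst_mul (eps : ((Asub N k) ⧸ JA N k) →ₗ[R0 N] R0 N)
    (heps_rho : eps (clsm N k (fun _ => N - 1)) = 1)
    (heps_zero : ∀ lam : PartIdx N k, lam.1 ≠ (fun _ => N - 1) → eps (clsm N k lam.1) = 0)
    {lam mu : Fin k → ℕ} (h : ∑ i, lam i + ∑ i, mu i ≤ k * (N - 1)) :
    eps (clst N k lam * clst N k mu)
      = ((k ! * #{π : Equiv.Perm (Fin k) | ∀ j, lam j + mu (π j) = N - 1} : ℕ) : R0 N) := by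
  have hsum (π : Equiv.Perm (Fin k)) : ∑ i, (lam + mu ∘ π) i ≤ k * (N - 1) := by
    simpa [Finset.sum_add_distrib, Equiv.sum_comp π mu] using h
  simp only [clst_mul, map_sum, eps_clst N k eps heps_rho heps_zero (hsum _), funext_iff,
    Pi.add_apply, Function.comp_apply, Finset.sum_ite, Finset.sum_const_zero, add_zero,
    Finset.sum_const, nsmul_eq_mul]
  push_cast
  ring

lemma card_add_lamC_eq_card_stabilizer {lam : Fin k → ℕ} (hlam : ∀ i, lam i ≤ N - 1) :
    #{π : Equiv.Perm (Fin k) | ∀ j, lam j + lamC N k lam (π j) = N - 1}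
      = Fintype.card {g : Equiv.Perm (Fin k) // lam ∘ g = lam} := by
  rw [Fintype.card_subtype]
  refine Finset.card_equiv (Equiv.mulLeft Fin.revPerm) fun π => ?_
  rw [Finset.mem_filter_univ, Finset.mem_filter_univ]
  simp only [funext_iff, lamC, Equiv.coe_mulLeft, Function.comp_apply,
    Equiv.Perm.coe_mul, Fin.revPerm_apply]
  exact forall_congr' fun j => by have := hlam j; have := hlam (π j).rev; omega

lemma card_stabilizer_eq_prod_factorial_multCount {lam : Fin k → ℕ} (hlam : ∀ i, lam i < N) :
    Fintype.card {g : Equiv.Perm (Fin k) // lam ∘ g = lam}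
      = ∏ c ∈ Finset.range N, (multCount k lam c)! := by
  rw [DomMulAct.stabilizer_card']
  simp only [Fintype.card_subtype]
  refine Finset.prod_subset (fun c hc => ?_) fun c _ hc => ?_
  · obtain ⟨i, -, rfl⟩ := Finset.mem_image.1 hc
    exact Finset.mem_range.2 (hlam i)
  · rw [Finset.card_eq_zero.2, Nat.factorial_zero]
    exact Finset.filter_eq_empty_iff.2 fun i _ hi => hc (Finset.mem_image.2 ⟨i, by simp, hi⟩)

lemma lamC_antitone {lam : Fin k → ℕ} (hlam : Antitone lam) : Antitone (lamC N k lam) :=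
  fun _ _ hij => Nat.sub_le_sub_left (hlam (Fin.rev_le_rev.2 hij)) _

lemma sum_add_sum_lamC {lam : Fin k → ℕ} (hlam : ∀ i, lam i ≤ N - 1) :
    ∑ i, lam i + ∑ i, lamC N k lam i = k * (N - 1) := by
  rw [show ∑ i, lamC N k lam i = ∑ i, (N - 1 - lam i) from
    Equiv.sum_comp Fin.revPerm fun i => N - 1 - lam i, ← Finset.sum_add_distrib,
    Finset.sum_congr rfl fun i _ => Nat.add_sub_cancel' (hlam i)]
  simp

lemma eq_lamC_of_forall_add_eq {lam mu : Fin k → ℕ} (hlam : Antitone lam)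
    (hlam' : ∀ i, lam i ≤ N - 1) (hmu : Antitone mu) {π : Equiv.Perm (Fin k)}
    (h : ∀ j, lam j + mu (π j) = N - 1) : mu = lamC N k lam := by
  have hmu_eq : mu = lamC N k lam ∘ ⇑((Fin.revPerm : Equiv.Perm (Fin k)) * π⁻¹) :=
    funext fun j => by
      have := h (π⁻¹ j)
      have := hlam' (π⁻¹ j)
      simp_all [lamC]
      omega
  have hlamC : Antitone (lamC N k lam ∘ ⇑(1 : Equiv.Perm (Fin k))) := lamC_antitone N k hlam
  rw [hmu_eq] at hmu ⊢
  exact (Tuple.unique_antitone hlamC hmu).symm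

theorem pairing_on_mtil_basis (hN : 1 ≤ N)
    (eps : ((Asub N k) ⧸ JA N k) →ₗ[R0 N] R0 N)
    (heps_rho : eps (clsm N k (fun _ => N - 1)) = 1)
    (heps_zero : ∀ lam : PartIdx N k, lam.1 ≠ (fun _ => N - 1) → eps (clsm N k lam.1) = 0)
    (lam : Fin k → ℕ) (hlam₁ : Antitone lam) (hlam₂ : ∀ i, lam i ≤ N - 1) :
    (eps (clst N k lam * clst N k (lamC N k lam)) = (pairCount N k lam : R0 N) ∧
      pairCount N k lam
        = Nat.factorial k * (∏ c ∈ Finset.range N, Nat.factorial (multCount k lam c)) ∧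
      0 < pairCount N k lam) ∧
    ∀ mu : Fin k → ℕ, Antitone mu → (∀ i, mu i ≤ N - 1) →
      (∑ i, lam i) + (∑ i, mu i) ≤ k * (N - 1) → mu ≠ lamC N k lam →
        eps (clst N k lam * clst N k mu) = 0 := by
  have hpair :
      pairCount N k lam = k ! * Fintype.card {g : Equiv.Perm (Fin k) // lam ∘ g = lam} := by
    rw [pairCount, card_perm_pairs_eq_factorial_mul, Fintype.card_fin,
      card_add_lamC_eq_card_stabilizer N k hlam₂]
  refine ⟨⟨?_, ?_, ?_⟩, fun mu hmu _ hsum hne => ?_⟩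
  · rw [eps_clst_mul N k eps heps_rho heps_zero (sum_add_sum_lamC N k hlam₂).le,
      card_add_lamC_eq_card_stabilizer N k hlam₂, hpair]
  · rw [hpair, card_stabilizer_eq_prod_factorial_multCount N k fun i => by
      have := hlam₂ i; omega]
  · rw [hpair]
    exact Nat.mul_pos (Nat.factorial_pos k) (Fintype.card_pos_iff.2 ⟨⟨1, rfl⟩⟩)
  · rw [eps_clst_mul N k eps heps_rho heps_zero hsum, Finset.card_eq_zero.2, mul_zero,
      Nat.cast_zero]
    exact Finset.filter_eq_empty_iff.2 fun π _ h =>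
      hne (eq_lamC_of_forall_add_eq N k hlam₁ hlam₂ hmu h)

end SymKR
end
end

section
/- Let k̲ = (k_1,…,k_l) be a finite sequence of positive integers summing to k. For any two distinct pairs (i_1, j_1) ≠ (i_2, j_2) with 1 ≤ i_t ≤ l and 1 ≤ j_t ≤ k_{i_t}, the elements D^N(e_{j_1}^{(i_1)}) and D^N(e_{j_2}^{(i_2)}) of A_{k̲} are coprime in A_{k̲}: every common divisor of them in A_{k̲} is a unit (a nonzero rational number). -/
/-!
Grade `ℚ[T, x]` by the degree in the `x`-variables. Top components multiply, so the top
component of a common divisor of `D^N(e_{r₁+1}^{(i₁)})` and `D^N(e_{r₂+1}^{(i₂)})` divides both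
of their top components `G_{i,r} = Σ_a x_a^N e_r(x_b : b ≠ a)` (`a, b` in block `i`); once these
are coprime, that top component is a unit, and then so is the divisor.

Divisors of `p` only involve variables of `p`, so `G`'s of different blocks are coprime. Within
one block of `n` variables, `G_{r₁}` and `G_{r₂}` (`r₁ < r₂ < n`) are coprime by induction on
`n`, specialising the last variable to `0`: a common factor is homogeneous of positive degree,
so it stays a nonunit. For `n = r₂ + 1`, `G_{r₂} = x_1⋯x_n · p_{N-1}` with `p_m` the power sums, and the same
induction shows that `G_r` is prime to `p_{N-1}` and that `p_m` is prime to `p_{m+1}`.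
-/

open MvPolynomial Finset

noncomputable section

namespace Finset

theorem powersetCard_eq_image_erase {α : Type*} [DecidableEq α] {t : Finset α} {k : ℕ}
    (ht : #t = k + 1) : powersetCard k t = t.image t.erase := by
  ext S
  rw [mem_powersetCard, mem_image]
  constructor
  · rintro ⟨hSt, hS⟩
    obtain ⟨b, hbS, rfl⟩ := exists_eq_insert_iff.2 ⟨hSt, by omega⟩
    exact ⟨b, mem_insert_self b S, erase_insert hbS⟩
  · rintro ⟨b, hb, rfl⟩
    exact ⟨erase_subset b t, by rw [card_erase_of_mem hb, ht]; rfl⟩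

end Finset

namespace Polynomial

variable {A ι : Type*} [CommRing A] [Fintype ι] (a : A) (b : ι → A)

theorem natDegree_C_mul_X_sub_C_le (c : A) : (C a * X - C c).natDegree ≤ 1 := by
  compute_degree

theorem natDegree_prod_C_mul_X_sub_C_le :
    (∏ t, (C a * X - C (b t))).natDegree ≤ Fintype.card ι :=
  (natDegree_prod_le _ _).trans
    ((sum_le_sum fun t _ => natDegree_C_mul_X_sub_C_le a (b t)).trans (by simp))

theorem coeff_prod_C_mul_X_sub_C :
    (∏ t, (C a * X - C (b t))).coeff (Fintype.card ι) = a ^ Fintype.card ι := by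
  have := coeff_prod_of_natDegree_le univ _ 1 fun t _ => natDegree_C_mul_X_sub_C_le a (b t)
  rw [card_univ, mul_one] at this
  simp [this]

end Polynomial

namespace MvPolynomial

section Grading

variable {σ R : Type*} [CommSemiring R] (w : σ → ℕ)

def weightedGrading : MvPolynomial σ R →ₐ[R] Polynomial (MvPolynomial σ R) :=
  aeval fun v => Polynomial.C (X v) * Polynomial.X ^ w v

theorem weightedGrading_X (v : σ) :
    weightedGrading w (X v : MvPolynomial σ R) = Polynomial.C (X v) * Polynomial.X ^ w v :=
  aeval_X _ v

theorem weightedGrading_monomial (d : σ →₀ ℕ) (c : R) :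
    weightedGrading w (monomial d c) = Polynomial.C (monomial d c) * Polynomial.X ^ d.weight w := by
  classical
  rw [weightedGrading, aeval_monomial, Finsupp.weight_apply, Finsupp.sum, Finsupp.prod,
    ← prod_pow_eq_pow_sum, monomial_eq, Finsupp.prod, map_mul, map_prod, mul_assoc,
    ← prod_mul_distrib]
  simp only [mul_pow, ← pow_mul, smul_eq_mul, mul_comm (w _), map_pow,
    Polynomial.algebraMap_apply, algebraMap_eq]

theorem coeff_weightedGrading (p : MvPolynomial σ R) (n : ℕ) :
    (weightedGrading w p).coeff n = weightedHomogeneousComponent w n p := by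
  classical
  induction p using MvPolynomial.induction_on' with
  | monomial d c =>
    rw [weightedGrading_monomial, Polynomial.coeff_C_mul_X_pow]
    split_ifs with h
    · rw [(isWeightedHomogeneous_monomial w d c h.symm).weightedHomogeneousComponent_same]
    · rw [weightedHomogeneousComponent_of_mem (isWeightedHomogeneous_monomial w d c rfl),
        if_neg h]
  | add p q hp hq => simp [hp, hq]

theorem eval_one_weightedGrading (p : MvPolynomial σ R) : (weightedGrading w p).eval 1 = p := by
  induction p using MvPolynomial.induction_on' with
  | monomial d c => simp [weightedGrading_monomial]
  | add p q hp hq => simp [hp, hq]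

theorem weightedGrading_injective : Function.Injective (weightedGrading (R := R) w) :=
  Function.LeftInverse.injective (eval_one_weightedGrading w)

theorem weightedGrading_rename {τ : Type*} (w : τ → ℕ) (f : σ → τ) (p : MvPolynomial σ R) :
    weightedGrading w (rename f p) =
      (weightedGrading (w ∘ f) p).map (rename (R := R) f).toRingHom := by
  induction p using MvPolynomial.induction_on with
  | C a => simp [weightedGrading, Polynomial.algebraMap_apply]
  | add p q hp hq => simp [hp, hq]
  | mul_X p v hp => simp [hp, weightedGrading_X]

variable {w}

theorem IsWeightedHomogeneous.weightedGrading_eq {p : MvPolynomial σ R} {n : ℕ}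
    (hp : IsWeightedHomogeneous w p n) :
    weightedGrading w p = Polynomial.C p * Polynomial.X ^ n := by
  ext1 m
  rw [coeff_weightedGrading, Polynomial.coeff_C_mul_X_pow]
  split_ifs with h
  · rw [h, hp.weightedHomogeneousComponent_same]
  · exact hp.weightedHomogeneousComponent_ne m h

theorem IsHomogeneous.weightedGrading_rename {τ : Type*} {w : τ → ℕ} {f : σ → τ}
    (hwf : w ∘ f = 1) {p : MvPolynomial σ R} {n : ℕ} (hp : p.IsHomogeneous n) :
    weightedGrading w (rename f p) = Polynomial.C (rename f p) * Polynomial.X ^ n := by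
  rw [MvPolynomial.weightedGrading_rename, hwf, IsWeightedHomogeneous.weightedGrading_eq hp]
  simp

theorem isWeightedHomogeneous_of_coeff_weightedGrading_eq_zero {p : MvPolynomial σ R} {n : ℕ}
    (h : ∀ m ≠ n, (weightedGrading w p).coeff m = 0) : IsWeightedHomogeneous w p n := by
  intro d hd
  by_contra hne
  have := congrArg (coeff d) (h _ hne)
  rw [coeff_weightedGrading, coeff_weightedHomogeneousComponent, if_pos rfl] at this
  exact hd this

end Grading

theorem pderiv_prod_X_of_notMem {σ R : Type*} [CommSemiring R] [Nontrivial R] {a : σ} {S : Finset σ}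
    (haS : a ∉ S) : pderiv a (∏ v ∈ S, X v : MvPolynomial σ R) = 0 := by
  classical
  refine pderiv_eq_zero_of_notMem_vars fun h => haS ?_
  obtain ⟨v, hv, hav⟩ := mem_biUnion.1 (vars_prod _ h)
  rw [vars_X, mem_singleton] at hav
  exact hav ▸ hv

theorem isRelPrime_of_eval_eq_zero {σ R : Type*} [CommRing R] {L p : MvPolynomial σ R}
    (hL : Irreducible L) (x : σ → R) (hLx : eval x L = 0) (hpx : eval x p ≠ 0) :
    IsRelPrime L p :=
  hL.isRelPrime_iff_not_dvd.2 fun ⟨q, hq⟩ => hpx (by rw [hq, map_mul, hLx, zero_mul])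

section Domain

variable {σ R : Type*} [CommRing R] [IsDomain R] {w : σ → ℕ}

theorem IsWeightedHomogeneous.exists_of_dvd {A p : MvPolynomial σ R} {n : ℕ}
    (hA : IsWeightedHomogeneous w A n) (hA0 : A ≠ 0) (hpA : p ∣ A) :
    ∃ m ≤ n, IsWeightedHomogeneous w p m := by
  obtain ⟨q, rfl⟩ := hpA
  have hp : weightedGrading w p ≠ 0 :=
    (map_ne_zero_iff _ (weightedGrading_injective w)).2 (left_ne_zero_of_mul hA0)
  have hq : weightedGrading w q ≠ 0 :=
    (map_ne_zero_iff _ (weightedGrading_injective w)).2 (right_ne_zero_of_mul hA0)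
  have hpq : weightedGrading w p * weightedGrading w q =
      Polynomial.C (p * q) * Polynomial.X ^ n := by
    rw [← map_mul, hA.weightedGrading_eq]
  have hdeg := Polynomial.natDegree_mul hp hq
  have htrail := Polynomial.natTrailingDegree_mul hp hq
  rw [hpq, Polynomial.natDegree_C_mul_X_pow _ _ hA0] at hdeg
  rw [hpq, Polynomial.C_mul_X_pow_eq_monomial, Polynomial.natTrailingDegree_monomial hA0] at htrail
  have := Polynomial.natTrailingDegree_le_natDegree (weightedGrading w p)
  have := Polynomial.natTrailingDegree_le_natDegree (weightedGrading w q)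
  -- the product is a monomial, so each factor is one
  refine ⟨(weightedGrading w p).natDegree, by omega,
    isWeightedHomogeneous_of_coeff_weightedGrading_eq_zero fun k hk => ?_⟩
  rcases lt_or_gt_of_ne hk with hlt | hgt
  · exact Polynomial.coeff_eq_zero_of_lt_natTrailingDegree (by omega)
  · exact Polynomial.coeff_eq_zero_of_natDegree_lt hgt

variable (w) in
def leadingForm : MvPolynomial σ R →* MvPolynomial σ R :=
  Polynomial.leadingCoeffHom.comp (weightedGrading (R := R) w).toMonoidHom

theorem leadingForm_apply (p : MvPolynomial σ R) :
    leadingForm w p = (weightedGrading w p).leadingCoeff := rfl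

instance : IsLocalHom (leadingForm (R := R) w) where
  map_nonunit p hp := by
    classical
    obtain ⟨c, hc, hpc⟩ := isUnit_iff_eq_C_of_isReduced.1 hp
    rw [leadingForm_apply, Polynomial.leadingCoeff, coeff_weightedGrading] at hpc
    have hD : (weightedGrading w p).natDegree = 0 := by
      have hc0 := congrArg (coeff 0) hpc
      rw [coeff_weightedHomogeneousComponent, coeff_C, if_pos rfl, map_zero] at hc0
      by_contra hD
      rw [if_neg (Ne.symm hD)] at hc0
      exact hc.ne_zero hc0.symm
    have hp_eq : p = leadingForm w p := by
      conv_lhs => rw [← eval_one_weightedGrading w p,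
        Polynomial.eq_C_of_natDegree_eq_zero hD, Polynomial.eval_C]
      rw [leadingForm_apply, Polynomial.leadingCoeff, hD]
    exact hp_eq ▸ hp

theorem vars_subset_of_dvd {p q : MvPolynomial σ R} (hq : q ≠ 0) (hpq : p ∣ q) :
    p.vars ⊆ q.vars := by
  classical
  let w : σ → ℕ := fun v => if v ∈ q.vars then 0 else 1
  have weight_eq_zero {d : σ →₀ ℕ} : d.weight w = 0 ↔ ∀ v ∈ d.support, v ∈ q.vars := by
    simp only [w, Finsupp.weight_apply, Finsupp.sum, sum_eq_zero_iff, smul_eq_mul, mul_eq_zero,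
      ite_eq_left_iff, one_ne_zero, imp_false, not_not, Finsupp.mem_support_iff]
    exact forall_congr' fun v => ⟨fun h hv => (h hv).resolve_left hv, fun h hv => Or.inr (h hv)⟩
  have hq0 : IsWeightedHomogeneous w q 0 := fun d hd =>
    weight_eq_zero.2 fun v hv => (mem_vars_iff_mem_support v).2 ⟨d, mem_support_iff.2 hd, hv⟩
  obtain ⟨m, hm, hp⟩ := hq0.exists_of_dvd hq hpq
  intro v hv
  obtain ⟨d, hd, hvd⟩ := (mem_vars_iff_mem_support v).1 hv
  exact weight_eq_zero.1 (Nat.le_zero.1 hm ▸ hp (mem_support_iff.1 hd)) v hvd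

theorem isRelPrime_rename {τ : Type*} {f : σ → τ} (hf : Function.Injective f)
    {a b : MvPolynomial σ R} (ha : a ≠ 0) (h : IsRelPrime a b) :
    IsRelPrime (rename f a) (rename f b) := by
  intro d hda hdb
  have hvars : (d.vars : Set τ) ⊆ Set.range f := fun v hv => by
    classical
    obtain ⟨u, -, rfl⟩ := mem_image.1 (vars_rename f a
      (vars_subset_of_dvd ((map_ne_zero_iff _ (rename_injective f hf)).2 ha) hda hv))
    exact ⟨u, rfl⟩
  obtain ⟨d₀, rfl⟩ := exists_rename_eq_of_vars_subset_range d f hf hvars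
  refine (h ?_ ?_).map (rename f)
  · simpa [killCompl_rename_app] using map_dvd (killCompl hf) hda
  · simpa [killCompl_rename_app] using map_dvd (killCompl hf) hdb

end Domain

section Field

variable {σ τ K : Type*} [Field K]

theorem isUnit_of_isHomogeneous_zero {p : MvPolynomial σ K} (hp : p.IsHomogeneous 0)
    (hp0 : p ≠ 0) : IsUnit p := by
  rw [← totalDegree_zero_iff_isHomogeneous, totalDegree_eq_zero_iff_eq_C] at hp
  rw [hp] at hp0 ⊢
  exact (Ne.isUnit fun h => hp0 (by rw [h, map_zero])).map C

theorem irreducible_of_isHomogeneous_one {p : MvPolynomial σ K} (hp : p.IsHomogeneous 1)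
    (hp0 : p ≠ 0) : Irreducible p where
  not_isUnit hu := by
    obtain ⟨c, -, rfl⟩ := isUnit_iff_eq_C_of_isReduced.1 hu
    exact one_ne_zero (hp.inj_right (isHomogeneous_C σ c) hp0)
  isUnit_or_isUnit a b hab := by
    subst hab
    obtain ⟨m, -, ha : a.IsHomogeneous m⟩ := hp.exists_of_dvd hp0 (dvd_mul_right a b)
    obtain ⟨k, -, hb : b.IsHomogeneous k⟩ := hp.exists_of_dvd hp0 (dvd_mul_left b a)
    have hmk : 1 = m + k := hp.inj_right (ha.mul hb) hp0
    rcases Nat.eq_zero_or_pos m with rfl | _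
    · exact Or.inl (isUnit_of_isHomogeneous_zero ha (left_ne_zero_of_mul hp0))
    · rw [show k = 0 by omega] at hb
      exact Or.inr (isUnit_of_isHomogeneous_zero hb (right_ne_zero_of_mul hp0))

theorem isRelPrime_of_disjoint_vars {p q : MvPolynomial σ K} (hp : p ≠ 0) (hq : q ≠ 0)
    (h : Disjoint p.vars q.vars) : IsRelPrime p q := by
  intro d hdp hdq
  have hd0 : d ≠ 0 := ne_zero_of_dvd_ne_zero hp hdp
  have hvars : d.vars = ∅ := subset_empty.1 fun v hv =>
    h (singleton_subset_iff.2 (vars_subset_of_dvd hp hdp hv))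
      (singleton_subset_iff.2 (vars_subset_of_dvd hq hdq hv)) (mem_singleton_self v)
  rw [vars_eq_empty_iff_eq_C] at hvars
  rw [hvars] at hd0 ⊢
  exact (Ne.isUnit fun h => hd0 (by rw [h, map_zero])).map C

theorem isRelPrime_of_isRelPrime_aeval {g : σ → MvPolynomial τ K}
    (hg : ∀ i, (g i).IsHomogeneous 1) {a b : MvPolynomial σ K} {n : ℕ} (ha : a.IsHomogeneous n)
    (ha0 : a ≠ 0) (h : IsRelPrime (aeval g a) (aeval g b)) : IsRelPrime a b := by
  intro d hda hdb
  obtain ⟨m, -, hd : d.IsHomogeneous m⟩ := ha.exists_of_dvd ha0 hda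
  have hgd : IsUnit (aeval g d) := h (map_dvd _ hda) (map_dvd _ hdb)
  obtain ⟨c, -, hc⟩ := isUnit_iff_eq_C_of_isReduced.1 hgd
  have hm : 1 * m = 0 := (hd.aeval g hg).inj_right (hc ▸ isHomogeneous_C τ c) hgd.ne_zero
  rw [one_mul] at hm
  exact isUnit_of_isHomogeneous_zero (hm ▸ hd) (ne_zero_of_dvd_ne_zero ha0 hda)

end Field

end MvPolynomial

namespace SymKRBlocks

section OneBlock

variable {n : ℕ}

def esymmExcept (a : Fin n) (r : ℕ) : MvPolynomial (Fin n) ℚ :=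
  ∑ S ∈ powersetCard r (univ.erase a), ∏ v ∈ S, X v

/-- `Σ_a x_a^N e_r(x_b : b ≠ a)`: on a single block of `n` variables, the top `x`-degree
component of `D^N(e_{r+1})`. -/
def topForm (n N r : ℕ) : MvPolynomial (Fin n) ℚ :=
  ∑ a, X a ^ N * esymmExcept a r

theorem pderiv_esymm_succ (a : Fin n) (r : ℕ) :
    pderiv a (esymm (Fin n) ℚ (r + 1)) = esymmExcept a r := by
  have ha : a ∉ univ.erase a := notMem_erase a univ
  have hnot {k : ℕ} {S : Finset (Fin n)} (hS : S ∈ powersetCard k (univ.erase a)) : a ∉ S :=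
    fun h => ha ((mem_powersetCard.1 hS).1 h)
  rw [esymm, ← insert_erase (mem_univ a), powersetCard_succ_insert ha, sum_union, sum_image,
    map_add, map_sum, map_sum, sum_eq_zero, zero_add, esymmExcept]
  · refine sum_congr rfl fun T hT => ?_
    rw [prod_insert (hnot hT), Derivation.leibniz, pderiv_prod_X_of_notMem (hnot hT),
      pderiv_X_self, smul_zero, zero_add, smul_eq_mul, mul_one]
  · exact fun S hS => pderiv_prod_X_of_notMem (hnot hS)
  · intro T hT U hU hTU
    rw [← erase_insert (hnot hT), hTU, erase_insert (hnot hU)]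
  · refine disjoint_left.2 fun S hS hS' => ?_
    obtain ⟨T, -, rfl⟩ := mem_image.1 hS'
    exact hnot hS (mem_insert_self a T)

theorem isHomogeneous_esymmExcept (a : Fin n) (r : ℕ) : (esymmExcept a r).IsHomogeneous r :=
  IsHomogeneous.sum _ _ _ fun S hS => (mem_powersetCard.1 hS).2 ▸ by
    simpa using IsHomogeneous.prod S (fun v => X v) (fun _ => 1) fun v _ => isHomogeneous_X ℚ v

theorem isHomogeneous_topForm (N r : ℕ) : (topForm n N r).IsHomogeneous (N + r) :=
  IsHomogeneous.sum _ _ _ fun a _ => (isHomogeneous_X_pow a N).mul (isHomogeneous_esymmExcept a r)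

theorem isHomogeneous_psum (n r : ℕ) : (psum (Fin n) ℚ r).IsHomogeneous r :=
  IsHomogeneous.sum _ _ _ fun a _ => isHomogeneous_X_pow a r

theorem eval_indicator_esymmExcept (s : Finset (Fin n)) (a : Fin n) (r : ℕ) :
    eval (fun v => if v ∈ s then 1 else 0) (esymmExcept a r) = ((#(s.erase a)).choose r : ℚ) := by
  rw [esymmExcept, map_sum, ← sum_subset (powersetCard_mono (erase_subset_erase a (subset_univ s))),
    ← card_powersetCard, cast_card]
  · refine sum_congr rfl fun S hS => ?_
    rw [map_prod]
    exact prod_eq_one fun v hv => by simp [mem_of_mem_erase ((mem_powersetCard.1 hS).1 hv)]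
  · intro S hS hS'
    simp only [mem_powersetCard, subset_erase, not_and] at hS hS'
    obtain ⟨v, hvS, hvs⟩ := not_subset.1 fun h => hS' ⟨h, hS.1.2⟩ hS.2
    rw [map_prod]
    exact prod_eq_zero hvS (by simp [hvs])

theorem eval_indicator_psum (s : Finset (Fin n)) {r : ℕ} (hr : r ≠ 0) :
    eval (fun v => if v ∈ s then 1 else 0) (psum (Fin n) ℚ r) = #s := by
  simp [psum, zero_pow hr]

theorem eval_indicator_topForm (s : Finset (Fin n)) {N : ℕ} (hN : N ≠ 0) (r : ℕ) :
    eval (fun v => if v ∈ s then 1 else 0) (topForm n N r) = #s * ((#s - 1).choose r : ℚ) := by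
  simp only [topForm, map_sum, map_mul, map_pow, eval_X, eval_indicator_esymmExcept, ite_pow,
    zero_pow hN, one_pow, ite_mul, one_mul, zero_mul]
  rw [sum_ite_mem, univ_inter, sum_congr rfl fun a ha => by rw [card_erase_of_mem ha], sum_const,
    nsmul_eq_mul]

theorem isUnit_psum_zero (hn : n ≠ 0) : IsUnit (psum (Fin n) ℚ 0) := by
  rw [psum_zero, Fintype.card_fin, ← map_natCast C]
  exact (Nat.cast_ne_zero.2 hn).isUnit.map C

theorem psum_ne_zero (hn : n ≠ 0) {r : ℕ} (hr : r ≠ 0) : psum (Fin n) ℚ r ≠ 0 := fun h => by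
  simpa [h, eq_comm, hn] using eval_indicator_psum (univ : Finset (Fin n)) hr

theorem topForm_ne_zero {N r : ℕ} (hN : N ≠ 0) (hr : r < n) : topForm n N r ≠ 0 := fun h => by
  have := eval_indicator_topForm (univ : Finset (Fin n)) hN r
  simp only [h, map_zero, card_univ, Fintype.card_fin, zero_eq_mul, Nat.cast_eq_zero] at this
  exact this.elim (by omega) (Nat.choose_pos (by omega)).ne'

theorem isRelPrime_X_of_eval_ne_zero {p : MvPolynomial (Fin n) ℚ} (a : Fin n)
    (h : eval (fun v => if v ∈ univ.erase a then 1 else 0) p ≠ 0) : IsRelPrime (X a) p :=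
  isRelPrime_of_eval_eq_zero X_prime.irreducible _ (by simp) h

theorem esymmExcept_sub_one (a : Fin n) : esymmExcept a (n - 1) = ∏ v ∈ univ.erase a, X v := by
  have hcard : #(univ.erase a) = n - 1 := by simp
  rw [esymmExcept, ← hcard, powersetCard_self, sum_singleton]

theorem topForm_sub_one (n M : ℕ) :
    topForm n (M + 1) (n - 1) = (∏ v, X v) * psum (Fin n) ℚ M := by
  rw [topForm, psum, mul_sum]
  refine sum_congr rfl fun a _ => ?_
  rw [esymmExcept_sub_one, ← mul_prod_erase univ X (mem_univ a)]
  ring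

theorem sum_prod_erase_mul_psum (n M : ℕ) :
    (∑ b : Fin (n + 2), ∏ v ∈ univ.erase b, X v) * psum _ ℚ (M + 1) =
      topForm (n + 2) (M + 2) n + (∏ v, X v) * psum _ ℚ M := by
  have hsplit (b : Fin (n + 2)) : (∏ v ∈ univ.erase b, X v) * psum _ ℚ (M + 1) =
      ∑ a ∈ univ.erase b, X a ^ (M + 2) * ∏ v ∈ (univ.erase b).erase a, X v +
        X b ^ M * ∏ v, X v := by
    rw [psum, mul_sum, ← sum_erase_add _ _ (mem_univ b), ← mul_prod_erase univ X (mem_univ b)]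
    congr 1
    · refine sum_congr rfl fun a ha => ?_
      rw [← mul_prod_erase _ X ha]
      ring
    · ring
  have hesymm (a : Fin (n + 2)) :
      esymmExcept a n = ∑ b ∈ univ.erase a, ∏ v ∈ (univ.erase a).erase b, X v := by
    rw [esymmExcept, powersetCard_eq_image_erase (by simp), sum_image (erase_injOn _)]
  rw [sum_mul, sum_congr rfl fun b _ => hsplit b, sum_add_distrib, psum, mul_sum, topForm]
  congr 1
  · rw [sum_comm' (t' := univ) (s' := fun a => univ.erase a) (by simp [and_comm, eq_comm])]
    refine sum_congr rfl fun a _ => ?_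
    rw [hesymm, mul_sum]
    exact sum_congr rfl fun b _ => by rw [erase_right_comm]
  · exact sum_congr rfl fun b _ => mul_comm _ _

variable (n) in
def setLastZero : MvPolynomial (Fin (n + 1)) ℚ →ₐ[ℚ] MvPolynomial (Fin n) ℚ :=
  aeval (Fin.snoc X 0)

@[simp]
theorem setLastZero_X_castSucc (i : Fin n) : setLastZero n (X i.castSucc) = X i := by
  simp [setLastZero]

@[simp]
theorem setLastZero_X_last : setLastZero n (X (Fin.last n)) = 0 := by
  simp [setLastZero]

theorem setLastZero_psum {r : ℕ} (hr : r ≠ 0) :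
    setLastZero n (psum (Fin (n + 1)) ℚ r) = psum (Fin n) ℚ r := by
  simp [psum, Fin.sum_univ_castSucc, zero_pow hr]

theorem setLastZero_esymmExcept (a : Fin n) (r : ℕ) :
    setLastZero n (esymmExcept a.castSucc r) = esymmExcept a r := by
  have hsub : (univ.erase a).map Fin.castSuccEmb ⊆ univ.erase a.castSucc := by
    intro v hv
    obtain ⟨b, hb, rfl⟩ := mem_map.1 hv
    simpa using ne_of_mem_erase hb
  rw [esymmExcept, map_sum, ← sum_subset (powersetCard_mono hsub), powersetCard_map, sum_map,
    esymmExcept]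
  · simp
  · -- the remaining subsets contain the last variable
    intro S hS hS'
    rw [mem_powersetCard] at hS
    obtain ⟨v, hvS, hv⟩ := not_subset.1 fun h => hS' (mem_powersetCard.2 ⟨h, hS.2⟩)
    have hlast : v = Fin.last n := by
      by_contra hlast
      obtain ⟨b, rfl⟩ := Fin.exists_castSucc_eq.2 hlast
      have hba : b ≠ a := fun h => ne_of_mem_erase (hS.1 hvS) (congrArg _ h)
      exact hv (mem_map_of_mem _ (mem_erase.2 ⟨hba, mem_univ b⟩))
    rw [map_prod]
    exact prod_eq_zero hvS (hlast ▸ setLastZero_X_last)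

theorem setLastZero_topForm {N : ℕ} (hN : N ≠ 0) (r : ℕ) :
    setLastZero n (topForm (n + 1) N r) = topForm n N r := by
  rw [topForm, map_sum, Fin.sum_univ_castSucc]
  simp [setLastZero_esymmExcept, zero_pow hN, topForm]

theorem isRelPrime_of_isRelPrime_setLastZero {p q : MvPolynomial (Fin (n + 1)) ℚ} {d : ℕ}
    (hp : p.IsHomogeneous d) (hp0 : p ≠ 0) (h : IsRelPrime (setLastZero n p) (setLastZero n q)) :
    IsRelPrime p q := by
  refine isRelPrime_of_isRelPrime_aeval (fun i => ?_) hp hp0 h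
  induction i using Fin.lastCases with
  | last => simpa using isHomogeneous_zero (Fin n) ℚ 1
  | cast j => simpa using isHomogeneous_X ℚ j

theorem isRelPrime_psum_psum_succ {r : ℕ} (hr : r ≠ 0) {n : ℕ} (hn : 2 ≤ n) :
    IsRelPrime (psum (Fin n) ℚ r) (psum (Fin n) ℚ (r + 1)) := by
  induction n, hn using Nat.le_induction with
  | base =>
    have hL : (X 1 - X 0 : MvPolynomial (Fin 2) ℚ).IsHomogeneous 1 :=
      (isHomogeneous_X ℚ 1).sub (isHomogeneous_X ℚ 0)
    have hL0 : (X 1 - X 0 : MvPolynomial (Fin 2) ℚ) ≠ 0 := fun h => by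
      simpa using congrArg (eval ![0, 1]) h
    have hid : psum (Fin 2) ℚ (r + 1) = X 1 * psum (Fin 2) ℚ r - X 0 ^ r * (X 1 - X 0) := by
      simp only [psum, Fin.sum_univ_two]
      ring
    rw [hid, IsRelPrime.mul_sub_right_right_iff]
    refine IsRelPrime.mul_right (IsRelPrime.pow_right ?_) ?_
    · exact (isRelPrime_X_of_eval_ne_zero 0 (by rw [eval_indicator_psum _ hr]; simp)).symm
    · exact (isRelPrime_of_eval_eq_zero (irreducible_of_isHomogeneous_one hL hL0) 1 (by simp)
        (by simp [psum])).symm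
  | succ n hn ih =>
    refine isRelPrime_of_isRelPrime_setLastZero (isHomogeneous_psum _ r)
      (psum_ne_zero (by omega) hr) ?_
    rwa [setLastZero_psum hr, setLastZero_psum (by omega)]

theorem isRelPrime_psum_succ_psum (hn : 2 ≤ n) (M : ℕ) :
    IsRelPrime (psum (Fin n) ℚ (M + 1)) (psum (Fin n) ℚ M) := by
  rcases M with _ | M
  · exact (isUnit_psum_zero (by omega)).isRelPrime_right
  · exact (isRelPrime_psum_psum_succ M.succ_ne_zero hn).symm

theorem isRelPrime_psum_prod_X {r : ℕ} (hr : r ≠ 0) (hn : 2 ≤ n) :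
    IsRelPrime (psum (Fin n) ℚ r) (∏ v, X v) :=
  IsRelPrime.prod_right fun v _ => (isRelPrime_X_of_eval_ne_zero v (by
    rw [eval_indicator_psum _ hr, card_erase_of_mem (mem_univ v)]
    simp
    omega)).symm

theorem isRelPrime_topForm_psum (M : ℕ) {r n : ℕ} (hn : r + 2 ≤ n) :
    IsRelPrime (topForm n (M + 2) r) (psum (Fin n) ℚ (M + 1)) := by
  induction n, hn using Nat.le_induction with
  | base =>
    rw [eq_sub_of_add_eq (sum_prod_erase_mul_psum r M).symm]
    refine (IsRelPrime.mul_sub_right_right_iff.2 (IsRelPrime.mul_right ?_ ?_)).symm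
    · exact isRelPrime_psum_prod_X M.succ_ne_zero (by omega)
    · exact isRelPrime_psum_succ_psum (by omega) M
  | succ n hn ih =>
    refine isRelPrime_of_isRelPrime_setLastZero (isHomogeneous_topForm _ r)
      (topForm_ne_zero (by omega) (by omega)) ?_
    rwa [setLastZero_topForm (by omega), setLastZero_psum (by omega)]

theorem isRelPrime_topForm_topForm (M : ℕ) {r₁ r₂ : ℕ} (hr : r₁ < r₂) {n : ℕ} (hn : r₂ < n) :
    IsRelPrime (topForm n (M + 1) r₁) (topForm n (M + 1) r₂) := by
  induction n, hn using Nat.le_induction with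
  | base =>
    have htop := topForm_sub_one (r₂ + 1) M
    rw [Nat.add_sub_cancel] at htop
    rw [htop]
    refine IsRelPrime.mul_right (IsRelPrime.prod_right fun v _ => ?_) ?_
    · refine (isRelPrime_X_of_eval_ne_zero v ?_).symm
      rw [eval_indicator_topForm _ M.succ_ne_zero, card_erase_of_mem (mem_univ v)]
      simpa using ⟨by omega, (Nat.choose_pos (by omega)).ne'⟩
    · rcases M with _ | M
      · exact (isUnit_psum_zero r₂.succ_ne_zero).isRelPrime_right
      · exact isRelPrime_topForm_psum M (by omega)
  | succ n hn ih =>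
    refine isRelPrime_of_isRelPrime_setLastZero (isHomogeneous_topForm _ r₁)
      (topForm_ne_zero M.succ_ne_zero (by omega)) ?_
    rwa [setLastZero_topForm M.succ_ne_zero, setLastZero_topForm M.succ_ne_zero]

end OneBlock

variable (N l : ℕ) (ks : Fin l → ℕ)

/-- The index type of the `x`-variables: `l` blocks of sizes `k_1,…,k_l`. -/
abbrev Blk := (i : Fin l) × Fin (ks i)

/-- The ambient ring `ℚ[T_1,…,T_N, x_a (a ∈ ι)]`. -/
abbrev Amb := MvPolynomial (Fin N ⊕ Blk l ks) ℚ

/-- The action of a permutation of `{1,…,N}` on the `T`-variables. -/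
def actT (σ : Equiv.Perm (Fin N)) : Amb N l ks →ₐ[ℚ] Amb N l ks :=
  rename (Sum.map (⇑σ) id)

/-- The action of a block permutation on the `x`-variables. -/
def actX (τ : (i : Fin l) → Equiv.Perm (Fin (ks i))) : Amb N l ks →ₐ[ℚ] Amb N l ks :=
  rename (Sum.map id (⇑(Equiv.sigmaCongrRight τ)))

/-- `A_{k̲} = R_N[x]^{𝔖_{k̲}}`. -/
def Ablk : Subalgebra ℚ (Amb N l ks) :=
  (⨅ σ : Equiv.Perm (Fin N), AlgHom.equalizer (actT N l ks σ) (AlgHom.id ℚ _)) ⊓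
    ⨅ τ : (i : Fin l) → Equiv.Perm (Fin (ks i)),
      AlgHom.equalizer (actX N l ks τ) (AlgHom.id ℚ _)

/-- `e_j^{(i)}`: the `j`-th elementary symmetric polynomial in the `i`-th block of
`x`-variables. -/
def eB (i : Fin l) (j : ℕ) : Amb N l ks :=
  rename (fun a : Fin (ks i) => (Sum.inr ⟨i, a⟩ : Fin N ⊕ Blk l ks))
    (esymm (Fin (ks i)) ℚ j)

/-- The derivation `D^N(P) = Σ_{a∈ι} (∏_{j=1}^N (x_a − T_j)) · ∂P/∂x_a`. -/
def DN (p : Amb N l ks) : Amb N l ks :=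
  ∑ a : Blk l ks,
    (∏ j : Fin N, (X (Sum.inr a) - X (Sum.inl j))) * pderiv (Sum.inr a) p

def blockVar (i : Fin l) (a : Fin (ks i)) : Fin N ⊕ Blk l ks := Sum.inr ⟨i, a⟩

theorem blockVar_injective (i : Fin l) : Function.Injective (blockVar N l ks i) := by
  intro a b h
  simpa [blockVar] using h

def xWeight : Fin N ⊕ Blk l ks → ℕ := Sum.elim 0 1

theorem DN_eB_succ (i : Fin l) (r : ℕ) :
    DN N l ks (eB N l ks i (r + 1)) = ∑ a : Fin (ks i),
      (∏ t : Fin N, (X (blockVar N l ks i a) - X (Sum.inl t))) *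
        rename (blockVar N l ks i) (esymmExcept a r) := by
  rw [DN, Fintype.sum_sigma, sum_eq_single i]
  · refine sum_congr rfl fun a _ => ?_
    rw [eB, ← pderiv_esymm_succ, ← pderiv_rename (blockVar_injective N l ks i)]
    rfl
  · intro j _ hji
    refine sum_eq_zero fun a _ => ?_
    rw [pderiv_eq_zero_of_notMem_vars, mul_zero]
    intro h
    classical
    obtain ⟨b, -, hb⟩ := mem_image.1 (vars_rename _ _ h)
    exact hji (congrArg Sigma.fst (Sum.inr_injective hb)).symm
  · simp

theorem leadingForm_DN_eB {i : Fin l} {r : ℕ} (hN : N ≠ 0) (hr : r < ks i) :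
    leadingForm (xWeight N l ks) (DN N l ks (eB N l ks i (r + 1))) =
      rename (blockVar N l ks i) (topForm (ks i) N r) := by
  set L : Fin (ks i) → Polynomial (Amb N l ks) := fun a =>
    ∏ t : Fin N, (Polynomial.C (X (blockVar N l ks i a)) * Polynomial.X -
      Polynomial.C (X (Sum.inl t)))
  set F := weightedGrading (xWeight N l ks) (DN N l ks (eB N l ks i (r + 1)))
  have hF : F = ∑ a, L a *
      (Polynomial.C (rename (blockVar N l ks i) (esymmExcept a r)) * Polynomial.X ^ r) := by
    simp only [F, L, DN_eB_succ, map_sum, map_mul, map_prod, map_sub, weightedGrading_X,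
      (isHomogeneous_esymmExcept _ r).weightedGrading_rename
        (rfl : xWeight N l ks ∘ blockVar N l ks i = 1)]
    simp [xWeight, blockVar]
  have hcoeff : F.coeff (N + r) = rename (blockVar N l ks i) (topForm (ks i) N r) := by
    rw [hF, Polynomial.finsetSum_coeff, topForm, map_sum]
    refine sum_congr rfl fun a _ => ?_
    have hLN := Polynomial.coeff_prod_C_mul_X_sub_C (X (blockVar N l ks i a) : Amb N l ks)
      fun t : Fin N => X (Sum.inl t)
    rw [Fintype.card_fin] at hLN
    rw [← mul_assoc, Polynomial.coeff_mul_X_pow, Polynomial.coeff_mul_C, hLN, map_mul, map_pow,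
      rename_X]
  have hdeg : F.natDegree ≤ N + r := by
    rw [hF]
    refine Polynomial.natDegree_sum_le_of_forall_le _ _ fun a _ => ?_
    have hLN := Polynomial.natDegree_prod_C_mul_X_sub_C_le (X (blockVar N l ks i a) : Amb N l ks)
      fun t : Fin N => X (Sum.inl t)
    rw [Fintype.card_fin] at hLN
    exact Polynomial.natDegree_mul_le.trans
      (add_le_add hLN (Polynomial.natDegree_C_mul_X_pow_le _ _))
  have hne : rename (blockVar N l ks i) (topForm (ks i) N r) ≠ 0 :=
    (map_ne_zero_iff _ (rename_injective _ (blockVar_injective N l ks i))).2 (topForm_ne_zero hN hr)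
  rw [leadingForm_apply, Polynomial.leadingCoeff,
    Polynomial.natDegree_eq_of_le_of_coeff_ne_zero hdeg (hcoeff ▸ hne), hcoeff]

theorem isRelPrime_rename_topForm (hN : N ≠ 0) {i₁ i₂ : Fin l} {r₁ r₂ : ℕ} (hr₁ : r₁ < ks i₁)
    (hr₂ : r₂ < ks i₂) (hne : (i₁, r₁) ≠ (i₂, r₂)) :
    IsRelPrime (rename (blockVar N l ks i₁) (topForm (ks i₁) N r₁))
      (rename (blockVar N l ks i₂) (topForm (ks i₂) N r₂)) := by
  by_cases hi : i₁ = i₂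
  · subst hi
    have hr : r₁ ≠ r₂ := fun h => hne (h ▸ rfl)
    refine isRelPrime_rename (blockVar_injective N l ks i₁) (topForm_ne_zero hN hr₁) ?_
    obtain ⟨M, rfl⟩ := Nat.exists_eq_add_one_of_ne_zero hN
    rcases lt_or_gt_of_ne hr with h | h
    · exact isRelPrime_topForm_topForm M h hr₂
    · exact (isRelPrime_topForm_topForm M h hr₁).symm
  · classical
    have hne_zero {i : Fin l} {r : ℕ} (hr : r < ks i) :
        rename (blockVar N l ks i) (topForm (ks i) N r) ≠ 0 :=
      (map_ne_zero_iff _ (rename_injective _ (blockVar_injective N l ks i))).2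
        (topForm_ne_zero hN hr)
    refine isRelPrime_of_disjoint_vars (hne_zero hr₁) (hne_zero hr₂) ?_
    refine disjoint_left.2 fun v hv₁ hv₂ => ?_
    obtain ⟨a₁, -, rfl⟩ := mem_image.1 (vars_rename _ _ hv₁)
    obtain ⟨a₂, -, h⟩ := mem_image.1 (vars_rename _ _ hv₂)
    exact hi (congrArg Sigma.fst (Sum.inr_injective h)).symm

theorem DN_eB_coprime (hN : 1 ≤ N)
    (i₁ i₂ : Fin l) (j₁ j₂ : ℕ)
    (hj₁ : 1 ≤ j₁) (hj₁' : j₁ ≤ ks i₁) (hj₂ : 1 ≤ j₂) (hj₂' : j₂ ≤ ks i₂)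
    (hne : (i₁, j₁) ≠ (i₂, j₂))
    (P : Amb N l ks)
    (hdvd₁ : ∃ Q ∈ Ablk N l ks, DN N l ks (eB N l ks i₁ j₁) = P * Q)
    (hdvd₂ : ∃ Q ∈ Ablk N l ks, DN N l ks (eB N l ks i₂ j₂) = P * Q) :
    ∃ c : ℚ, c ≠ 0 ∧ P = C c := by
  obtain ⟨r₁, rfl⟩ : ∃ r, j₁ = r + 1 := ⟨j₁ - 1, by omega⟩
  obtain ⟨r₂, rfl⟩ : ∃ r, j₂ = r + 1 := ⟨j₂ - 1, by omega⟩
  obtain ⟨Q₁, -, hQ₁⟩ := hdvd₁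
  obtain ⟨Q₂, -, hQ₂⟩ := hdvd₂
  have hN0 : N ≠ 0 := by omega
  have hcop :
      IsRelPrime (DN N l ks (eB N l ks i₁ (r₁ + 1))) (DN N l ks (eB N l ks i₂ (r₂ + 1))) := by
    refine IsRelPrime.of_map (leadingForm (xWeight N l ks)) ?_
    rw [leadingForm_DN_eB N l ks hN0 (by omega), leadingForm_DN_eB N l ks hN0 (by omega)]
    exact isRelPrime_rename_topForm N l ks hN0 (by omega) (by omega) (by simpa using hne)
  obtain ⟨c, hc, hPc⟩ := isUnit_iff_eq_C_of_isReduced.1 (hcop ⟨Q₁, hQ₁⟩ ⟨Q₂, hQ₂⟩)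
  exact ⟨c, hc.ne_zero, hPc⟩

end SymKRBlocks

end
end

section
/- The sequence 0 → A¹¹ →^α A¹¹ ⊗_{A²} A¹¹ →^μ A¹¹ → 0 is exact, where α(a) = a·(x_k − x_{k−1}) ⊗ 1 − a ⊗ (x_k − x_{k−1}) and μ(a ⊗ b) = ab; both maps are left A¹¹-linear and both are right A²-linear, μ is surjective, α is injective, and the image of α equals the kernel of μ. -/
/-!
STATEMENT 12: The sequence `0 → A¹¹ →^α A¹¹ ⊗_{A²} A¹¹ →^μ A¹¹ → 0` is exact, where
`α(a) = a(x_k − x_{k−1}) ⊗ 1 − a ⊗ (x_k − x_{k−1})` and `μ(a ⊗ b) = ab`; both maps are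
left `A¹¹`-linear and right `A²`-linear, `μ` is surjective, `α` is injective, and
`im α = ker μ`.

Setup: `k̲¹¹ = (k_1,…,k_{l−2},1,1)`; the `x`-variables are indexed by
`(Σ i : Fin m, Fin (ks i)) ⊕ Fin 2` (`m = l−2` blocks and the two final singleton
strands `x_{k−1} = inr 0`, `x_k = inr 1`); the ambient ring is
`ℚ[T_1,…,T_N, x's]`.  `A¹¹` is the subalgebra of polynomials symmetric in the
`T`-variables and invariant under block permutations; `A² ⊆ A¹¹` consists of those
additionally symmetric in `x_{k−1}, x_k`.
-/

open MvPolynomial TensorProduct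

set_option synthInstance.maxHeartbeats 1000000
set_option maxHeartbeats 1600000

noncomputable section
namespace Stab

variable (N m : ℕ) (ks : Fin m → ℕ)

/-- The index type of the `x`-variables. -/
abbrev XIdx := ((i : Fin m) × Fin (ks i)) ⊕ Fin 2

/-- The ambient ring `ℚ[T_1,…,T_N, x's]`. -/
abbrev Amb := MvPolynomial (Fin N ⊕ XIdx m ks) ℚ

/-- The action of a permutation of `{1,…,N}` on the `T`-variables. -/
def actT (σ : Equiv.Perm (Fin N)) : Amb N m ks →ₐ[ℚ] Amb N m ks :=
  rename (Sum.map (⇑σ) id)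

/-- The action of a block permutation on the first `l−2` blocks of `x`-variables. -/
def actB (τ : (i : Fin m) → Equiv.Perm (Fin (ks i))) : Amb N m ks →ₐ[ℚ] Amb N m ks :=
  rename (Sum.map id (Sum.map (⇑(Equiv.sigmaCongrRight τ)) id))

/-- The action of a permutation of the two last strands `x_{k−1}, x_k`. -/
def actS (ρ : Equiv.Perm (Fin 2)) : Amb N m ks →ₐ[ℚ] Amb N m ks :=
  rename (Sum.map id (Sum.map id (⇑ρ)))

/-- `A¹¹ = R_N[x]^{𝔖_{k̲¹¹}}`. -/
def A11 : Subalgebra ℚ (Amb N m ks) :=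
  (⨅ σ : Equiv.Perm (Fin N), AlgHom.equalizer (actT N m ks σ) (AlgHom.id ℚ _)) ⊓
    ⨅ τ : (i : Fin m) → Equiv.Perm (Fin (ks i)),
      AlgHom.equalizer (actB N m ks τ) (AlgHom.id ℚ _)

/-- `A² = R_N[x]^{𝔖_{k̲²}}`, where the two last strands are merged. -/
def A2 : Subalgebra ℚ (Amb N m ks) :=
  A11 N m ks ⊓ ⨅ ρ : Equiv.Perm (Fin 2), AlgHom.equalizer (actS N m ks ρ) (AlgHom.id ℚ _)

lemma A2_le_A11 : A2 N m ks ≤ A11 N m ks := inf_le_left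

instance : Algebra (A2 N m ks) (A11 N m ks) :=
  (Subalgebra.inclusion (A2_le_A11 N m ks)).toRingHom.toAlgebra

/-- The element `x_k − x_{k−1}` of `A¹¹`. -/
def wel : A11 N m ks :=
  ⟨X (Sum.inr (Sum.inr 1)) - X (Sum.inr (Sum.inr 0)), by
    rw [A11, Algebra.mem_inf]
    constructor
    · rw [Algebra.mem_iInf]
      intro σ
      rw [AlgHom.mem_equalizer]
      show (rename _ : Amb N m ks →ₐ[ℚ] _) _ = _
      rw [map_sub, rename_X, rename_X]
      rfl
    · rw [Algebra.mem_iInf]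
      intro τ
      rw [AlgHom.mem_equalizer]
      show (rename _ : Amb N m ks →ₐ[ℚ] _) _ = _
      rw [map_sub, rename_X, rename_X]
      rfl⟩

/-- The map `α : a ↦ a(x_k − x_{k−1}) ⊗ 1 − a ⊗ (x_k − x_{k−1})`. -/
def alphaMap : A11 N m ks →ₗ[A2 N m ks] (A11 N m ks ⊗[A2 N m ks] A11 N m ks) where
  toFun a := (a * wel N m ks) ⊗ₜ[A2 N m ks] (1 : A11 N m ks) -
    a ⊗ₜ[A2 N m ks] wel N m ks
  map_add' a b := by
    simp only [add_mul, TensorProduct.add_tmul]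
    abel
  map_smul' r a := by
    simp only [smul_mul_assoc, TensorProduct.smul_tmul', RingHom.id_apply, smul_sub]

/-- The multiplication map `μ : A¹¹ ⊗_{A²} A¹¹ → A¹¹`. -/
def muMap : (A11 N m ks ⊗[A2 N m ks] A11 N m ks) →ₗ[A2 N m ks] A11 N m ks :=
  LinearMap.mul' (A2 N m ks) (A11 N m ks)


/-!
Let `w = x_k − x_{k−1}` and let `s` swap `x_{k−1}` and `x_k`. Every `a ∈ A¹¹` is
`½(a + s a) + ½(a − s a)`; the antisymmetric part vanishes at `x_{k−1} = x_k`, so it is `q w`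
with `q ∈ A²` (the symmetries of `A¹¹` fix `w`, and the ambient ring is a domain). Applying `s`
to `p + q w = 0` gives `p − q w = 0`, so `1, w` is an `A²`-basis of `A¹¹`.

Given any `R`-algebra `B` with basis `1, w`, let `π(x ⊗ y) = y_w x`, where `y_w` is the
`w`-coordinate of `y`. Then `π (α a) = −a`, so `α` is injective, and `t + α (π t) = μ t ⊗ 1`,
so every `t ∈ ker μ` equals `α (−π t)`.
-/

section

variable {σ R : Type*} [CommRing R] [DecidableEq σ]

lemma X_sub_X_dvd_sub_aeval_update (i j : σ) (f : MvPolynomial σ R) :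
    X i - X j ∣ f - aeval (Function.update X i (X j)) f := by
  set u : σ → MvPolynomial σ R := Function.update X i (X j)
  induction f using MvPolynomial.induction_on with
  | C a => simp
  | add p q hp hq => rw [map_add, add_sub_add_comm]; exact dvd_add hp hq
  | mul_X p n hp =>
    have hn : X i - X j ∣ X n - u n := by rcases eq_or_ne n i with rfl | h <;> simp [u, *]
    rw [map_mul, aeval_X,
      show p * X n - aeval u p * u n = (p - aeval u p) * X n + aeval u p * (X n - u n) by ring]
    exact dvd_add (dvd_mul_of_dvd_left hp _) (dvd_mul_of_dvd_right hn _)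

lemma X_sub_X_dvd_of_rename_swap_eq_neg [IsDomain R] [CharZero R] {i j : σ}
    {f : MvPolynomial σ R} (hf : rename (Equiv.swap i j) f = -f) : X i - X j ∣ f := by
  set φ : MvPolynomial σ R →ₐ[R] MvPolynomial σ R := aeval (Function.update X i (X j))
  have hφ : φ.comp (rename (Equiv.swap i j)) = φ := by
    refine algHom_ext fun n => ?_
    simp only [φ, AlgHom.comp_apply, rename_X, aeval_X, Equiv.swap_apply_def,
      Function.update_apply]
    split_ifs <;> simp_all
  have hφf : φ f = 0 := by
    rw [← CharZero.eq_neg_self_iff, ← map_neg, ← hf, ← AlgHom.comp_apply, hφ]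
  have h := X_sub_X_dvd_sub_aeval_update (R := R) i j f
  change X i - X j ∣ f - φ f at h
  rwa [hφf, sub_zero] at h

end

lemma rename_comm {σ R : Type*} [CommSemiring R] {f g : σ → σ} (h : f ∘ g = g ∘ f)
    (x : MvPolynomial σ R) : rename f (rename g x) = rename g (rename f x) := by
  rw [rename_rename, rename_rename, h]

section

variable {R B : Type*} [CommRing R] [CommRing B] [Algebra R B]

def mulTmulOneSubTmul (w : B) : B →ₗ[R] B ⊗[R] B where
  toFun a := (a * w) ⊗ₜ[R] (1 : B) - a ⊗ₜ[R] w
  map_add' a b := by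
    simp only [add_mul, TensorProduct.add_tmul]
    abel
  map_smul' r a := by
    simp only [smul_mul_assoc, TensorProduct.smul_tmul', RingHom.id_apply, smul_sub]

lemma mulTmulOneSubTmul_apply (w a : B) :
    mulTmulOneSubTmul (R := R) w a = (a * w) ⊗ₜ[R] (1 : B) - a ⊗ₜ[R] w := rfl

lemma mulTmulOneSubTmul_mul (w c a : B) :
    mulTmulOneSubTmul (R := R) w (c * a) = c • mulTmulOneSubTmul w a := by
  simp only [mulTmulOneSubTmul_apply, smul_sub, smul_tmul', smul_eq_mul, mul_assoc]

lemma mul'_mulTmulOneSubTmul (w a : B) : LinearMap.mul' R B (mulTmulOneSubTmul w a) = 0 := by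
  simp [mulTmulOneSubTmul_apply]

lemma mul'_smul (c : B) (t : B ⊗[R] B) :
    LinearMap.mul' R B (c • t) = c * LinearMap.mul' R B t := by
  induction t using TensorProduct.induction_on with
  | zero => simp
  | tmul x y => simp [smul_tmul', mul_assoc]
  | add u v hu hv => rw [smul_add, map_add, hu, hv, map_add, mul_add]

lemma mul'_surjective : Function.Surjective (LinearMap.mul' R B) :=
  fun a => ⟨a ⊗ₜ 1, by simp⟩

variable (b : Module.Basis (Fin 2) R B)

def rightCoord : B ⊗[R] B →ₗ[R] B := TensorProduct.rid R B ∘ₗ (b.coord 1).lTensor B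

lemma rightCoord_tmul (x y : B) : rightCoord b (x ⊗ₜ y) = b.coord 1 y • x := rfl

variable {b}

lemma eq_coord_zero_smul_one_add (hb : b 0 = 1) (y : B) :
    y = b.coord 0 y • 1 + b.coord 1 y • b 1 := by
  nth_rw 1 [← b.sum_repr y]
  rw [Fin.sum_univ_two, hb]
  rfl

lemma rightCoord_mulTmulOneSubTmul (hb : b 0 = 1) (a : B) :
    rightCoord b (mulTmulOneSubTmul (b 1) a) = -a := by
  simp [mulTmulOneSubTmul_apply, rightCoord_tmul, ← hb]

lemma mul'_tmul_one_eq (hb : b 0 = 1) (t : B ⊗[R] B) :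
    LinearMap.mul' R B t ⊗ₜ 1 = t + mulTmulOneSubTmul (b 1) (rightCoord b t) := by
  induction t using TensorProduct.induction_on with
  | zero => simp
  | tmul x y =>
    rw [LinearMap.mul'_apply, rightCoord_tmul, mulTmulOneSubTmul_apply]
    have hy := eq_coord_zero_smul_one_add hb y
    generalize b.coord 0 y = c0, b.coord 1 y = c1 at hy ⊢
    subst hy
    simp only [mul_add, mul_smul_comm, mul_one, add_tmul, tmul_add, smul_mul_assoc,
      ← smul_tmul]
    abel
  | add u v hu hv => rw [map_add, add_tmul, hu, hv, map_add, map_add]; abel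

theorem injective_mulTmulOneSubTmul (hb : b 0 = 1) :
    Function.Injective (mulTmulOneSubTmul (R := R) (b 1)) :=
  Function.LeftInverse.injective (g := fun t => -rightCoord b t) fun a => by
    simp [rightCoord_mulTmulOneSubTmul hb]

theorem range_mulTmulOneSubTmul (hb : b 0 = 1) :
    LinearMap.range (mulTmulOneSubTmul (R := R) (b 1)) =
      LinearMap.ker (LinearMap.mul' R B) := by
  refine le_antisymm ?_ fun t ht => ⟨-rightCoord b t, ?_⟩
  · rintro _ ⟨a, rfl⟩
    exact mul'_mulTmulOneSubTmul _ a
  · have := mul'_tmul_one_eq hb t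
    rw [LinearMap.mem_ker.mp ht, zero_tmul] at this
    rw [map_neg, neg_eq_iff_add_eq_zero, add_comm, ← this]

end

def swapLast : Amb N m ks →ₐ[ℚ] Amb N m ks := actS N m ks (Equiv.swap 0 1)

variable {N m ks}

lemma swapLast_eq_rename_swap :
    swapLast N m ks = rename (Equiv.swap (.inr (.inr 1)) (.inr (.inr 0))) := by
  rw [swapLast, actS]
  congr 1
  funext i
  rcases i with i | i | r
  · exact (Equiv.swap_apply_of_ne_of_ne (by simp) (by simp)).symm
  · exact (Equiv.swap_apply_of_ne_of_ne (by simp) (by simp)).symm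
  · fin_cases r <;> simp

lemma swapLast_swapLast (x : Amb N m ks) : swapLast N m ks (swapLast N m ks x) = x := by
  rw [swapLast_eq_rename_swap, rename_rename,
    show _ ∘ _ = id from funext (Equiv.swap_apply_self _ _), rename_id_apply]

lemma coe_wel : (wel N m ks : Amb N m ks) = X (.inr (.inr 1)) - X (.inr (.inr 0)) := rfl

lemma swapLast_wel : swapLast N m ks (wel N m ks) = -(wel N m ks : Amb N m ks) := by
  simp [swapLast_eq_rename_swap, coe_wel]

lemma wel_ne_zero : (wel N m ks : Amb N m ks) ≠ 0 := by
  simp [coe_wel, sub_eq_zero, X_injective.eq_iff]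

lemma actT_swapLast (σ : Equiv.Perm (Fin N)) (x : Amb N m ks) :
    actT N m ks σ (swapLast N m ks x) = swapLast N m ks (actT N m ks σ x) :=
  rename_comm (by funext i; rcases i with _ | _ | _ <;> rfl) x

lemma actB_swapLast (τ : (i : Fin m) → Equiv.Perm (Fin (ks i))) (x : Amb N m ks) :
    actB N m ks τ (swapLast N m ks x) = swapLast N m ks (actB N m ks τ x) :=
  rename_comm (by funext i; rcases i with _ | _ | _ <;> rfl) x

lemma mem_A11_iff {x : Amb N m ks} :
    x ∈ A11 N m ks ↔ (∀ σ, actT N m ks σ x = x) ∧ ∀ τ, actB N m ks τ x = x := by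
  simp [A11, Algebra.mem_inf, Algebra.mem_iInf, AlgHom.mem_equalizer]

lemma mem_A2_iff {x : Amb N m ks} :
    x ∈ A2 N m ks ↔ x ∈ A11 N m ks ∧ swapLast N m ks x = x := by
  have hS : ∀ ρ : Equiv.Perm (Fin 2), ρ = 1 ∨ ρ = Equiv.swap 0 1 := by decide
  simp only [A2, Algebra.mem_inf, Algebra.mem_iInf, AlgHom.mem_equalizer, AlgHom.id_apply]
  refine and_congr_right fun _ => ⟨fun h => h _, fun h ρ => ?_⟩
  rcases hS ρ with rfl | rfl
  · simp [actS]
  · exact h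

lemma swapLast_mem_A11 {x : Amb N m ks} (hx : x ∈ A11 N m ks) :
    swapLast N m ks x ∈ A11 N m ks := by
  rw [mem_A11_iff] at hx ⊢
  exact ⟨fun σ => by rw [actT_swapLast, hx.1], fun τ => by rw [actB_swapLast, hx.2]⟩

lemma mem_A11_of_mul_wel_mem {q : Amb N m ks} (h : q * wel N m ks ∈ A11 N m ks) :
    q ∈ A11 N m ks := by
  have cancel : ∀ φ : Amb N m ks →ₐ[ℚ] Amb N m ks, φ (wel N m ks) = wel N m ks →
      φ (q * wel N m ks) = q * wel N m ks → φ q = q := fun φ hφ hq =>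
    mul_right_cancel₀ wel_ne_zero (by rwa [map_mul, hφ] at hq)
  obtain ⟨hwT, hwB⟩ := mem_A11_iff.mp (wel N m ks).2
  obtain ⟨hT, hB⟩ := mem_A11_iff.mp h
  exact mem_A11_iff.mpr
    ⟨fun σ => cancel _ (hwT σ) (hT σ), fun τ => cancel _ (hwB τ) (hB τ)⟩

lemma wel_dvd_of_swapLast_eq_neg {g : Amb N m ks} (hg : swapLast N m ks g = -g) :
    (wel N m ks : Amb N m ks) ∣ g := by
  rw [swapLast_eq_rename_swap] at hg
  exact X_sub_X_dvd_of_rename_swap_eq_neg hg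

lemma exists_eq_add_mul_wel {a : Amb N m ks} (ha : a ∈ A11 N m ks) :
    ∃ p ∈ A2 N m ks, ∃ q ∈ A2 N m ks, a = p + q * wel N m ks := by
  set s := swapLast N m ks
  have hsa := swapLast_mem_A11 ha
  obtain ⟨q, hq⟩ : (wel N m ks : Amb N m ks) ∣ (1 / 2 : ℚ) • (a - s a) :=
    wel_dvd_of_swapLast_eq_neg <| by
      rw [map_smul, map_sub, swapLast_swapLast, ← smul_neg, neg_sub]
  refine ⟨(1 / 2 : ℚ) • (a + s a), mem_A2_iff.mpr ⟨?_, ?_⟩, q, mem_A2_iff.mpr ⟨?_, ?_⟩, ?_⟩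
  · exact Subalgebra.smul_mem _ (add_mem ha hsa) _
  · rw [map_smul, map_add, swapLast_swapLast, add_comm]
  · refine mem_A11_of_mul_wel_mem ?_
    rw [mul_comm, ← hq]
    exact Subalgebra.smul_mem _ (sub_mem ha hsa) _
  · refine mul_left_cancel₀ (wel_ne_zero (N := N) (m := m) (ks := ks)) ?_
    have h := congrArg s hq
    rw [map_smul, map_sub, swapLast_swapLast, map_mul, swapLast_wel, ← neg_sub, smul_neg,
      neg_mul, neg_inj, hq] at h
    exact h.symm
  · rw [mul_comm, ← hq]
    module

lemma eq_zero_of_add_mul_wel_eq_zero {p q : Amb N m ks} (hp : p ∈ A2 N m ks)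
    (hq : q ∈ A2 N m ks) (h : p + q * wel N m ks = 0) : p = 0 ∧ q = 0 := by
  have h' : p - q * wel N m ks = 0 := by
    simpa [(mem_A2_iff.mp hp).2, (mem_A2_iff.mp hq).2, swapLast_wel, sub_eq_add_neg]
      using congrArg (swapLast N m ks) h
  have hp0 : p = 0 := add_self_eq_zero.mp (by linear_combination h + h')
  rw [hp0, zero_add] at h
  exact ⟨hp0, (mul_eq_zero.mp h).resolve_right wel_ne_zero⟩

lemma coe_smul_one_add_smul_wel (p q : A2 N m ks) :
    ((p • 1 + q • wel N m ks : A11 N m ks) : Amb N m ks) = p + q * wel N m ks := by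
  show (p : Amb N m ks) * 1 + q * wel N m ks = _
  rw [mul_one]

variable (N m ks)

def basisOneWel : Module.Basis (Fin 2) (A2 N m ks) (A11 N m ks) :=
  .mk (v := ![1, wel N m ks])
    (LinearIndependent.pair_iff.mpr fun p q h => by
      have h' := congrArg Subtype.val h
      rw [coe_smul_one_add_smul_wel] at h'
      obtain ⟨hp, hq⟩ := eq_zero_of_add_mul_wel_eq_zero p.2 q.2 h'
      exact ⟨Subtype.ext hp, Subtype.ext hq⟩)
    (by
      rintro a -
      rw [Matrix.range_cons_cons_empty, Submodule.mem_span_pair]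
      obtain ⟨p, hp, q, hq, h⟩ := exists_eq_add_mul_wel a.2
      exact ⟨⟨p, hp⟩, ⟨q, hq⟩, Subtype.ext (by rw [coe_smul_one_add_smul_wel, h])⟩)

lemma basisOneWel_zero : basisOneWel N m ks 0 = 1 := by simp [basisOneWel]

lemma basisOneWel_one : basisOneWel N m ks 1 = wel N m ks := by simp [basisOneWel]

theorem stabilization_sequence_exact :
    Function.Injective (alphaMap N m ks) ∧
    Function.Surjective (muMap N m ks) ∧
    LinearMap.range (alphaMap N m ks) = LinearMap.ker (muMap N m ks) ∧
    (∀ c a : A11 N m ks, alphaMap N m ks (c * a) = c • alphaMap N m ks a) ∧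
    (∀ (c : A11 N m ks) (t : A11 N m ks ⊗[A2 N m ks] A11 N m ks),
      muMap N m ks (c • t) = c * muMap N m ks t) := by
  have hb := basisOneWel_zero N m ks
  have hα : alphaMap N m ks = mulTmulOneSubTmul (basisOneWel N m ks 1) := by
    rw [basisOneWel_one]; rfl
  refine ⟨?_, mul'_surjective, ?_, mulTmulOneSubTmul_mul _, mul'_smul⟩
  · rw [hα]; exact injective_mulTmulOneSubTmul hb
  · rw [hα]; exact range_mulTmulOneSubTmul hb

end Stab
end
end
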